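/- arXiv:1806.04294 — 4 statements merged into one kernel-verified Lean document; each statement's English description precedes it below -/
import Mathlib

section
/- Let T : [1,∞) → ℝ be a nondecreasing, positive, convex, continuous function with T(1) > 1 and liminf_{r→∞} (log T(r))/r = 0. Fix δ ∈ (0,1/2) and define φ(r) = max_{1≤t≤r} (t/log T(t))^δ. Then there exist a set E ⊂ [1,∞) of zero lower density and a function ε with ε(r) → 0 as r → ∞ such that T(r) ≤ T(r+φ(r)) ≤ (1+ε(r))·T(r) for all r ∈ [1,∞)∖E. -/
open Filter MeasureTheory Topology
open scoped Classical

noncomputable section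

namespace TropNev

/-- `f` is tropical meromorphic: continuous and piecewise linear
(affine on a small interval on each side of every point). -/
def IsTropMero (f : ℝ → ℝ) : Prop :=
  Continuous f ∧ ∀ x : ℝ, ∃ ε > (0:ℝ), ∃ sR sL : ℝ,
    (∀ t ∈ Set.Icc x (x + ε), f t = f x + sR * (t - x)) ∧
    (∀ t ∈ Set.Icc (x - ε) x, f t = f x + sL * (t - x))

/-- ω_f(x): right derivative minus left derivative. -/
def omega (f : ℝ → ℝ) (x : ℝ) : ℝ :=
  derivWithin f (Set.Ici x) x - derivWithin f (Set.Iic x) x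

/-- tropical entire: tropical meromorphic with no poles. -/
def IsTropEntire (f : ℝ → ℝ) : Prop :=
  IsTropMero f ∧ ∀ x : ℝ, 0 ≤ omega f x

/-- tropical proximity function m(r,f). -/
def prox (f : ℝ → ℝ) (r : ℝ) : ℝ := (max (f r) 0 + max (f (-r)) 0) / 2

/-- tropical counting function of poles N(r,f). -/
def countN (f : ℝ → ℝ) (r : ℝ) : ℝ :=
  (1 / 2) * ∑' b : ℝ, if |b| < r ∧ omega f b < 0 then -omega f b * (r - |b|) else 0

/-- N(r, 1₀ ⊘ g): counting function of the roots of g. -/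
def countNroots (g : ℝ → ℝ) (r : ℝ) : ℝ := countN (fun x => -g x) r

/-- tropical Nevanlinna characteristic T(r,f). -/
def charT (f : ℝ → ℝ) (r : ℝ) : ℝ := prox f r + countN f r

/-- limsup_{r→∞} h(r) = 0 (in the real-analysis sense). -/
def LimsupZero (h : ℝ → ℝ) : Prop :=
  (∀ ε : ℝ, 0 < ε → ∀ᶠ r : ℝ in atTop, h r < ε) ∧
  (∀ ε : ℝ, 0 < ε → ∃ᶠ r : ℝ in atTop, -ε < h r)

/-- liminf_{r→∞} h(r) = 0 (in the real-analysis sense). -/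
def LiminfZero (h : ℝ → ℝ) : Prop :=
  (∀ ε : ℝ, 0 < ε → ∃ᶠ r : ℝ in atTop, h r < ε) ∧
  (∀ ε : ℝ, 0 < ε → ∀ᶠ r : ℝ in atTop, -ε < h r)

/-- E ⊆ [1,∞) has zero upper density. -/
def ZeroUpperDensity (E : Set ℝ) : Prop :=
  LimsupZero fun r => (volume (E ∩ Set.Icc 1 r)).toReal / r

/-- E ⊆ [1,∞) has zero lower density. -/
def ZeroLowerDensity (E : Set ℝ) : Prop :=
  LiminfZero fun r => (volume (E ∩ Set.Icc 1 r)).toReal / r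

/-- max of finitely many reals. -/
def tmax {m : ℕ} (F : Fin (m + 1) → ℝ) : ℝ :=
  Finset.univ.sup' Finset.univ_nonempty F

/-- tropical holomorphic curve with reduced representation f₀,…,f_n :
all components tropical entire, with no common roots. -/
def IsTropCurve {n : ℕ} (f : Fin (n + 1) → ℝ → ℝ) : Prop :=
  (∀ k, IsTropEntire (f k)) ∧ ∀ x : ℝ, ∃ k, ¬ 0 < omega (f k) x

/-- tropical Cartan characteristic T_f(r). -/
def curveT {n : ℕ} (f : Fin (n + 1) → ℝ → ℝ) (r : ℝ) : ℝ :=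
  (tmax (fun k => f k r) + tmax (fun k => f k (-r))) / 2 - tmax fun k => f k 0

/-- homogeneous tropical polynomial of degree d in the variables x₀,…,x_n,
with coefficients in ℝ ∪ {−∞} indexed by the degree-d monomials
(i.e. multisets of size d over the variables), not all −∞. -/
structure TropPoly (n d : ℕ) where
  coeff : Sym (Fin (n + 1)) d → EReal
  nontriv : ∃ s, coeff s ≠ ⊥

/-- value of the monomial term c_I + i₀x₀+⋯+i_nx_n. -/
def TropPoly.term {n d : ℕ} (P : TropPoly n d) (s : Sym (Fin (n + 1)) d)
    (x : Fin (n + 1) → ℝ) : EReal :=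
  P.coeff s + (((Multiset.map x (s : Multiset (Fin (n + 1)))).sum : ℝ) : EReal)

def TropPoly.evalE {n d : ℕ} (P : TropPoly n d) (x : Fin (n + 1) → ℝ) : EReal :=
  Finset.univ.sup fun s => P.term s x

/-- the tropical hypersurface V_P : points where the maximum is attained
by at least two monomials. -/
def TropPoly.hyp {n d : ℕ} (P : TropPoly n d) : Set (Fin (n + 1) → ℝ) :=
  {x | ∃ s t : Sym (Fin (n + 1)) d, s ≠ t ∧
        P.term s x = P.evalE x ∧ P.term t x = P.evalE x}

/-- the composition P ∘ f. -/
def TropPoly.compo {n d : ℕ} (P : TropPoly n d) (f : Fin (n + 1) → ℝ → ℝ) : ℝ → ℝ :=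
  fun t => (P.evalE fun k => f k t).toReal

/-- ‖a‖ = max_I c_I for the coefficient vector of P. -/
def TropPoly.coeffNorm {n d : ℕ} (P : TropPoly n d) : ℝ :=
  (Finset.univ.sup fun s => P.coeff s).toReal

/-- tropical Weil function λ_{V_P}(f(x)) = d‖f(x)‖ + d‖a‖ − (P∘f)(x). -/
def weil {n d : ℕ} (P : TropPoly n d) (f : Fin (n + 1) → ℝ → ℝ) (x : ℝ) : ℝ :=
  d * tmax (fun k => f k x) + d * P.coeffNorm - P.compo f x

/-- proximity function m_f(r, V_P). -/
def proxCurve {n d : ℕ} (f : Fin (n + 1) → ℝ → ℝ) (P : TropPoly n d) (r : ℝ) : ℝ :=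
  (weil P f r + weil P f (-r)) / 2

/-- f is tropical algebraically nondegenerate. -/
def AlgNondeg {n : ℕ} (f : Fin (n + 1) → ℝ → ℝ) : Prop :=
  ∀ d : ℕ, 1 ≤ d → ∀ P : TropPoly n d, ∃ t : ℝ, (fun k => f k t) ∉ P.hyp

/-- f is tropical linearly nondegenerate. -/
def LinNondeg {n : ℕ} (f : Fin (n + 1) → ℝ → ℝ) : Prop :=
  ∀ P : TropPoly n 1, ∃ t : ℝ, (fun k => f k t) ∉ P.hyp

/-- Gondran–Minoux linear independence of a finite family of real functions. -/
def GMLinIndep {ι : Type*} [Fintype ι] [DecidableEq ι] (g : ι → ℝ → ℝ) : Prop :=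
  ¬ ∃ (I J : Finset ι) (a : ι → EReal),
      I.Nonempty ∧ J.Nonempty ∧ Disjoint I J ∧ I ∪ J = Finset.univ ∧
      (∃ i, a i ≠ ⊥) ∧
      ∀ x : ℝ, (I.sup fun i => a i + ((g i x : ℝ) : EReal)) =
        (J.sup fun j => a j + ((g j x : ℝ) : EReal))

/-- the degree-d tropical monomials f^I in f₀,…,f_n. -/
def monos {n : ℕ} (f : Fin (n + 1) → ℝ → ℝ) (d : ℕ) :
    Sym (Fin (n + 1)) d → ℝ → ℝ :=
  fun s x => (Multiset.map (fun k => f k x) (s : Multiset (Fin (n + 1)))).sum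

/-- Gondran–Minoux algebraic independence. -/
def GMAlgIndep {n : ℕ} (f : Fin (n + 1) → ℝ → ℝ) : Prop :=
  ∀ d : ℕ, 1 ≤ d → GMLinIndep (monos f d)

/-- F is a complete tropical linear combination of the family h :
every tropical-linear representation of F over h has all coefficients finite. -/
def TropComplete {ι : Type*} [Fintype ι] (h : ι → ℝ → ℝ) (F : ℝ → ℝ) : Prop :=
  ∀ a : ι → EReal,
    (∀ x : ℝ, ((F x : ℝ) : EReal) = Finset.univ.sup fun k => a k + ((h k x : ℝ) : EReal)) →
    ∀ k, a k ≠ ⊥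

/-- the tropical Casoratian with shift c. -/
def casorati {m : ℕ} (c : ℝ) (g : Fin (m + 1) → ℝ → ℝ) : ℝ → ℝ := fun x =>
  Finset.univ.sup' Finset.univ_nonempty
    fun π : Equiv.Perm (Fin (m + 1)) => ∑ j, g j (x + ((π j : ℕ) : ℝ) * c)

/-- tropical Cartan characteristic for a reduced representation [f₀:f₁] in TP¹. -/
def charT2 (f0 f1 : ℝ → ℝ) (r : ℝ) : ℝ :=
  (max (f0 r) (f1 r) + max (f0 (-r)) (f1 (-r))) / 2 - max (f0 0) (f1 0)

/-- reduced representation in TP¹: f₀, f₁ tropical entire with no common roots. -/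
def ReducedPair (f0 f1 : ℝ → ℝ) : Prop :=
  IsTropEntire f0 ∧ IsTropEntire f1 ∧ ∀ x : ℝ, ¬ (0 < omega f0 x ∧ 0 < omega f1 x)

/-- (P∘f)(x) = max(a₀+f₀(x), a₁+f₁(x)) for a TP¹ value [a₁:a₀]. -/
def pcomp (a0 a1 : EReal) (f0 f1 : ℝ → ℝ) : ℝ → ℝ := fun x =>
  ((a0 + ((f0 x : ℝ) : EReal)) ⊔ (a1 + ((f1 x : ℝ) : EReal))).toReal

/-- defect of a tropical holomorphic curve with respect to a tropical hypersurface. -/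
def curveDefect {n d : ℕ} (f : Fin (n + 1) → ℝ → ℝ) (P : TropPoly n d) : ℝ :=
  1 - Filter.limsup (fun r => countNroots (P.compo f) r / (d * curveT f r)) atTop

end TropNev

end

open TropNev Filter MeasureTheory Topology

/-!
Write `L = log T`. At a point `R` where `t ↦ t / L t` attains its maximum over `[1, R]`,
`φ R = (R / L R) ^ δ`, so `φ R · L R / R = (R / L R) ^ (δ - 1)`; the liminf hypothesis makes
these maxima unbounded, so `φ R · L R / R` is frequently arbitrarily small. Choose a step
function `ε ↓ 0` with `φ R · L R / R = o(ε R)` along a sequence `R → ∞`. With `c = φ R`, every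
exceptional `x ≤ R - c` satisfies `L (x + c) - L x ≥ log (1 + ε R)`, while
`∫₁^{R-c} (L (x + c) - L x) dx ≤ c L R`; Markov's inequality then gives
`|E ∩ [1, R]| ≤ 2 c L R / ε R + c = o(R)` along that sequence.
-/

section

open Set

theorem setIntegral_Icc_sub_comp_add_le {L : ℝ → ℝ} {a b c : ℝ}
    (hL : MonotoneOn L (Ici a)) (hLa : 0 ≤ L a) (hc : 0 ≤ c) (hab : a ≤ b) :
    ∫ x in Icc a (b - c), (L (x + c) - L x) ≤ c * L b := by
  have hLb : 0 ≤ L b := hLa.trans (hL self_mem_Ici hab hab)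
  rcases lt_or_ge (b - c) a with hcb | hcb
  · rw [Icc_eq_empty_of_lt hcb, Measure.restrict_empty, integral_zero_measure]
    positivity
  have hint : ∀ u v, a ≤ u → a ≤ v → IntervalIntegrable L volume u v := fun u v hu hv =>
    (hL.mono fun x hx => le_trans (le_min hu hv) hx.1).intervalIntegrable
  have hshift : IntervalIntegrable (fun x => L (x + c)) volume a (b - c) := by
    simpa using (hint (a + c) b (by linarith) hab).comp_add_right c
  have htail : ∫ x in (b - c)..b, L x ≤ c * L b := by
    have h := intervalIntegral.integral_mono_on (by linarith : b - c ≤ b)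
      (hint _ _ hcb hab) intervalIntegrable_const
      fun x hx => hL (hcb.trans hx.1) hab hx.2
    simpa using h
  have hhead : 0 ≤ ∫ x in a..(a + c), L x :=
    intervalIntegral.integral_nonneg (by linarith) fun x hx =>
      hLa.trans (hL self_mem_Ici hx.1 hx.1)
  rw [integral_Icc_eq_integral_Ioc, ← intervalIntegral.integral_of_le hcb,
    intervalIntegral.integral_sub hshift (hint _ _ le_rfl hcb),
    intervalIntegral.integral_comp_add_right, sub_add_cancel,
    intervalIntegral.integral_interval_sub_interval_comm (hint _ _ (by linarith) hab)
      (hint _ _ le_rfl hcb) (hint _ _ (by linarith) le_rfl),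
    intervalIntegral.integral_symm a, intervalIntegral.integral_symm (b - c) b]
  linarith

theorem measureReal_inter_Icc_le_of_le_sub {L : ℝ → ℝ} {S : Set ℝ} {a b c η : ℝ}
    (hL : MonotoneOn L (Ici a)) (hLa : 0 ≤ L a) (hc : 0 ≤ c) (hab : a ≤ b) (hη : 0 < η)
    (hS : ∀ x ∈ S ∩ Icc a (b - c), η ≤ L (x + c) - L x) :
    volume.real (S ∩ Icc a b) ≤ c * L b / η + c := by
  set μ := volume.restrict (Icc a (b - c))
  have hnonneg : 0 ≤ᵐ[μ] fun x => L (x + c) - L x :=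
    ae_restrict_of_forall_mem measurableSet_Icc fun x hx =>
      sub_nonneg.2 (hL hx.1 (by simp only [mem_Ici]; linarith [hx.1]) (by linarith))
  have hint : Integrable (fun x => L (x + c) - L x) μ := by
    have hshift : MonotoneOn (fun x => L (x + c)) (Icc a (b - c)) := fun x hx y hy hxy =>
      hL (by simp only [mem_Ici]; linarith [hx.1]) (by simp only [mem_Ici]; linarith [hy.1])
        (by linarith)
    exact (hshift.integrableOn_isCompact isCompact_Icc).sub
      ((hL.mono fun x hx => hx.1).integrableOn_isCompact isCompact_Icc)
  have hmarkov := mul_meas_ge_le_integral_of_nonneg hnonneg hint η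
  rw [measureReal_def, Measure.restrict_apply' measurableSet_Icc, ← measureReal_def] at hmarkov
  have hB : volume.real ({x | η ≤ L (x + c) - L x} ∩ Icc a (b - c)) ≤ c * L b / η := by
    rw [le_div_iff₀ hη, mul_comm]
    exact hmarkov.trans (setIntegral_Icc_sub_comp_add_le hL hLa hc hab)
  have hsub : S ∩ Icc a b ⊆ ({x | η ≤ L (x + c) - L x} ∩ Icc a (b - c)) ∪ Icc (b - c) b := by
    rintro x ⟨hxS, hxa, hxb⟩
    rcases le_or_gt x (b - c) with hx | hx
    · exact Or.inl ⟨hS x ⟨hxS, hxa, hx⟩, hxa, hx⟩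
    · exact Or.inr ⟨hx.le, hxb⟩
  calc volume.real (S ∩ Icc a b)
      ≤ volume.real (({x | η ≤ L (x + c) - L x} ∩ Icc a (b - c)) ∪ Icc (b - c) b) :=
        measureReal_mono hsub ((measure_union_le _ _).trans_lt (ENNReal.add_lt_top.2
          ⟨(measure_mono inter_subset_right).trans_lt measure_Icc_lt_top,
            measure_Icc_lt_top⟩)).ne
    _ ≤ c * L b / η + c := by
        refine (measureReal_union_le _ _).trans (add_le_add hB ?_)
        rw [Real.volume_real_Icc]
        simp [hc]

theorem exists_antitone_tendsto_zero_frequently_lt_mul {g : ℝ → ℝ}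
    (hg : ∀ e > 0, ∃ᶠ R in atTop, g R < e) :
    ∃ ε : ℝ → ℝ, Antitone ε ∧ (∀ x, 0 < ε x ∧ ε x ≤ 1) ∧ Tendsto ε atTop (𝓝 0) ∧
      ∀ e > 0, ∃ᶠ R in atTop, g R < e * ε R := by
  choose F hF_ge hF_lt using fun (n : ℕ) (M : ℝ) =>
    frequently_atTop.1 (hg (1 / ((n : ℝ) + 1) ^ 2) (by positivity)) M
  -- `r (n + 1)` is a point beyond `r n + 1` where `g < 1 / (n + 2) ^ 2`
  let r : ℕ → ℝ := fun n => Nat.rec (F 0 0) (fun k rk => F (k + 1) (rk + 1)) n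
  have hr_succ : ∀ n, r n + 1 ≤ r (n + 1) := fun n => hF_ge _ _
  have hr_lt : ∀ n, g (r n) < 1 / ((n : ℝ) + 1) ^ 2 := by
    intro n; cases n <;> exact hF_lt _ _
  have hr_mono : Monotone r := monotone_nat_of_le_succ fun n => by linarith [hr_succ n]
  have hr_tendsto : Tendsto r atTop atTop := by
    have hr_ge : ∀ n : ℕ, r 0 + n ≤ r n := by
      intro n
      induction n with
      | zero => simp
      | succ k ih => push_cast; linarith [hr_succ k]
    exact tendsto_atTop_mono hr_ge
      (tendsto_atTop_add_const_left _ _ tendsto_natCast_atTop_atTop)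
  have hex : ∀ x, ∃ k, x < r (k + 1) := fun x =>
    ((hr_tendsto.eventually_gt_atTop x).exists_forall_of_atTop).imp fun k hk => hk _ k.le_succ
  -- for `x ≥ r 0`, `N x` is the index `n` with `r n ≤ x < r (n + 1)`
  let N : ℝ → ℕ := fun x => Nat.find (hex x)
  have hN_mono : Monotone N := fun x y hxy => Nat.find_mono fun k hk => hxy.trans_lt hk
  have hN_ge : ∀ m x, r m ≤ x → m ≤ N x := fun m x hx =>
    (Nat.le_find_iff _ _).2 fun k hk => not_lt.2 ((hr_mono hk).trans hx)
  have hN_le : ∀ n x, x < r (n + 1) → N x ≤ n := fun n x hx => Nat.find_min' (hex x) hx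
  have hN_tendsto : Tendsto N atTop atTop :=
    tendsto_atTop_atTop.2 fun m => ⟨r m, fun x hx => hN_ge m x hx⟩
  refine ⟨fun x => 1 / ((N x : ℝ) + 1), fun x y hxy => ?_, fun x => ⟨by positivity, ?_⟩,
    tendsto_one_div_add_atTop_nhds_zero_nat.comp hN_tendsto, fun e he => ?_⟩
  · exact one_div_le_one_div_of_le (by positivity) (by gcongr; exact hN_mono hxy)
  · rw [div_le_one (by positivity)]
    linarith [(N x).cast_nonneg (α := ℝ)]
  · rw [frequently_atTop]
    intro M
    obtain ⟨n, hnM, hne⟩ := ((hr_tendsto.eventually_ge_atTop M).and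
      (tendsto_one_div_add_atTop_nhds_zero_nat.eventually (ge_mem_nhds he))).exists
    refine ⟨r n, hnM, ?_⟩
    have hNn : N (r n) ≤ n := hN_le n (r n) (by linarith [hr_succ n])
    calc g (r n) < 1 / ((n : ℝ) + 1) * (1 / ((n : ℝ) + 1)) := by
          rw [← sq, div_pow, one_pow]; exact hr_lt n
      _ ≤ e * (1 / ((N (r n) : ℝ) + 1)) := by gcongr

theorem frequently_isMaxOn_Icc_and_le {h : ℝ → ℝ} {a : ℝ} (hc : ContinuousOn h (Ici a))
    (hh : ¬ BddAbove (h '' Ici a)) (M : ℝ) :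
    ∃ᶠ R in atTop, a ≤ R ∧ IsMaxOn h (Icc a R) R ∧ M ≤ h R := by
  rw [frequently_atTop]
  intro M₀
  obtain ⟨K, hK⟩ := (isCompact_Icc (a := a) (b := max a M₀)).image_of_continuousOn
    (hc.mono Icc_subset_Ici_self) |>.bddAbove
  obtain ⟨_, ⟨r, hra, rfl⟩, hr⟩ := not_bddAbove_iff.1 hh (max M K)
  obtain ⟨R, hR, hRmax⟩ := isCompact_Icc.exists_isMaxOn (nonempty_Icc.2 hra)
    (hc.mono Icc_subset_Ici_self)
  have hhR : max M K < h R := hr.trans_le (hRmax ⟨hra, le_rfl⟩)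
  have hRM₀ : M₀ ≤ R := by
    by_contra! hlt
    have : h R ≤ K := hK (mem_image_of_mem h ⟨hR.1, hlt.le.trans (le_max_right _ _)⟩)
    linarith [le_max_right M K]
  exact ⟨R, hRM₀, hR.1, hRmax.on_subset (Icc_subset_Icc_right hR.2),
    (le_max_left _ _).trans hhR.le⟩

theorem monotoneOn_sSup_image_Icc {f : ℝ → ℝ} {a : ℝ} (hf : ContinuousOn f (Ici a)) :
    MonotoneOn (fun r => sSup (f '' Icc a r)) (Ici a) := fun _ hr _ _ hrs =>
  csSup_le_csSup (isCompact_Icc.image_of_continuousOn (hf.mono Icc_subset_Ici_self)).bddAbove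
    ((nonempty_Icc.2 hr).image f) (image_mono (Icc_subset_Icc_right hrs))

theorem sSup_image_comp_eq_of_isMaxOn {g h : ℝ → ℝ} {s : Set ℝ} {R : ℝ} (hRs : R ∈ s)
    (hR : IsMaxOn h s R) (hg : MonotoneOn g (h '' s)) :
    sSup ((fun t => g (h t)) '' s) = g (h R) :=
  IsGreatest.csSup_eq ⟨mem_image_of_mem _ hRs, forall_mem_image.2 fun _ ht =>
    hg (mem_image_of_mem h ht) (mem_image_of_mem h hRs) (hR ht)⟩

theorem frequently_sSup_rpow_mul_div_lt {L : ℝ → ℝ} {δ e : ℝ} (hL : ContinuousOn L (Ici 1))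
    (hLpos : ∀ t ∈ Ici 1, 0 < L t) (hδ0 : 0 ≤ δ) (hδ1 : δ < 1)
    (hLr : ∀ s > 0, ∃ᶠ r in atTop, L r / r < s) (he : 0 < e) :
    ∃ᶠ R in atTop, sSup ((fun t => (t / L t) ^ δ) '' Icc 1 R) * L R / R < e := by
  have hh : ContinuousOn (fun t => t / L t) (Ici 1) :=
    continuousOn_id.div hL fun t ht => (hLpos t ht).ne'
  have hunbdd : ¬ BddAbove ((fun t => t / L t) '' Ici 1) := by
    rintro ⟨K, hK⟩
    obtain ⟨r, hr, hr1⟩ :=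
      ((hLr (1 / (|K| + 1)) (by positivity)).and_eventually (eventually_ge_atTop 1)).exists
    have hKr : |K| + 1 < r / L r := by
      rw [← one_div_div (L r) r]
      simpa using one_div_lt_one_div_of_lt (div_pos (hLpos r hr1) (by linarith)) hr
    linarith [le_abs_self K, hK (mem_image_of_mem _ hr1)]
  obtain ⟨K, hK⟩ := eventually_atTop.1 <|
    ((tendsto_rpow_neg_atTop (by linarith : 0 < 1 - δ)).eventually (gt_mem_nhds he)).and
      (eventually_gt_atTop 0)
  refine (frequently_isMaxOn_Icc_and_le hh hunbdd K).mono ?_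
  rintro R ⟨hR1, hRmax, hKR⟩
  obtain ⟨hlt, hpos⟩ := hK _ hKR
  have hmono : MonotoneOn (fun x : ℝ => x ^ δ) ((fun t => t / L t) '' Icc 1 R) := by
    rintro _ ⟨t, ht, rfl⟩ _ _ hxy
    exact Real.rpow_le_rpow (div_nonneg (by linarith [ht.1]) (hLpos t ht.1).le) hxy hδ0
  have hsup : sSup ((fun t => (t / L t) ^ δ) '' Icc 1 R) = (R / L R) ^ δ :=
    sSup_image_comp_eq_of_isMaxOn (right_mem_Icc.2 hR1) hRmax hmono
  rwa [hsup, ← div_div_eq_mul_div, ← Real.rpow_sub_one hpos.ne',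
    show δ - 1 = -(1 - δ) by ring]

def exceptionalSet (T φ ε : ℝ → ℝ) : Set ℝ :=
  {x | 1 ≤ x ∧ (1 + ε x) * T x < T (x + φ x)}

theorem measureReal_exceptionalSet_inter_Icc_le {T φ ε : ℝ → ℝ} {R : ℝ}
    (hT : MonotoneOn T (Ici 1)) (hT1 : 1 ≤ T 1) (hφ : MonotoneOn φ (Ici 1))
    (hφ0 : ∀ t ∈ Ici 1, 0 ≤ φ t) (hε : Antitone ε)
    (hεR : 0 < ε R) (hεR2 : ε R ≤ 2) (hR : 1 ≤ R) :
    volume.real (exceptionalSet T φ ε ∩ Icc 1 R) ≤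
      2 * (φ R * Real.log (T R)) / ε R + φ R := by
  have hTpos : ∀ t ∈ Ici 1, 0 < T t := fun t ht =>
    one_pos.trans_le (hT1.trans (hT self_mem_Ici ht ht))
  have hL : MonotoneOn (fun t => Real.log (T t)) (Ici 1) := fun x hx y hy hxy =>
    Real.log_le_log (hTpos x hx) (hT hx hy hxy)
  have hη : ε R / 2 ≤ Real.log (1 + ε R) := by
    refine le_trans ?_ (Real.le_log_one_add_of_nonneg hεR.le)
    rw [div_le_div_iff₀ two_pos (by linarith)]
    nlinarith
  have hgrowth : ∀ x ∈ exceptionalSet T φ ε ∩ Icc 1 (R - φ R),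
      Real.log (1 + ε R) ≤ Real.log (T (x + φ R)) - Real.log (T x) := by
    rintro x ⟨⟨hx1, hxE⟩, -, hxR⟩
    have hxR' : x ≤ R := by linarith [hφ0 R hR]
    have hlt : (1 + ε R) * T x < T (x + φ R) := calc
      (1 + ε R) * T x ≤ (1 + ε x) * T x := by gcongr; exacts [(hTpos x hx1).le, hε hxR']
      _ < T (x + φ x) := hxE
      _ ≤ T (x + φ R) := hT (by simp only [mem_Ici]; linarith [hφ0 x hx1])
          (by simp only [mem_Ici]; linarith [hφ0 R hR]) (by linarith [hφ hx1 hR hxR'])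
    have := Real.log_lt_log (by have := hTpos x hx1; positivity) hlt
    rw [Real.log_mul (by linarith) (hTpos x hx1).ne'] at this
    linarith
  calc _ ≤ φ R * Real.log (T R) / Real.log (1 + ε R) + φ R :=
        measureReal_inter_Icc_le_of_le_sub (L := fun t => Real.log (T t)) hL
          (Real.log_nonneg hT1) (hφ0 R hR) hR (by linarith) hgrowth
    _ ≤ φ R * Real.log (T R) / (ε R / 2) + φ R := by
        gcongr
        exact mul_nonneg (hφ0 R hR) (Real.log_nonneg (hT1.trans (hT self_mem_Ici hR hR)))
    _ = 2 * (φ R * Real.log (T R)) / ε R + φ R := by ring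

theorem frequently_measureReal_exceptionalSet_inter_Icc_div_lt {T φ ε : ℝ → ℝ}
    (hT : MonotoneOn T (Ici 1)) (hT1 : 1 < T 1) (hφ : MonotoneOn φ (Ici 1))
    (hφ0 : ∀ t ∈ Ici 1, 0 ≤ φ t) (hε : Antitone ε) (hε01 : ∀ x, 0 < ε x ∧ ε x ≤ 1)
    (hfreq : ∀ e > 0, ∃ᶠ R in atTop, φ R * Real.log (T R) / R < e * ε R) {e : ℝ} (he : 0 < e) :
    ∃ᶠ R in atTop, volume.real (exceptionalSet T φ ε ∩ Icc 1 R) / R < e := by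
  have hL₁ : 0 < Real.log (T 1) := Real.log_pos hT1
  set e' := e / (2 + 1 / Real.log (T 1))
  refine ((hfreq e' (by positivity)).and_eventually (eventually_ge_atTop 1)).mono ?_
  rintro R ⟨hR, hR1⟩
  obtain ⟨hεR, hεR1⟩ := hε01 R
  have hLR : Real.log (T 1) ≤ Real.log (T R) :=
    Real.log_le_log (by linarith) (hT self_mem_Ici hR1 hR1)
  have hφR := hφ0 R hR1
  have hRpos : 0 < R := by linarith
  calc _ ≤ (2 * (φ R * Real.log (T R)) / ε R + φ R) / R := by
        gcongr
        exact measureReal_exceptionalSet_inter_Icc_le hT hT1.le hφ hφ0 hε hεR (by linarith) hR1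
    _ = 2 * (φ R * Real.log (T R) / R) / ε R
          + φ R * Real.log (T 1) / R / Real.log (T 1) := by
        field_simp
    _ ≤ 2 * (φ R * Real.log (T R) / R) / ε R
          + φ R * Real.log (T R) / R / Real.log (T 1) := by
        gcongr
    _ < 2 * e' + e' * ε R / Real.log (T 1) := by
        gcongr
        rw [div_lt_iff₀ hεR]
        linarith
    _ ≤ 2 * e' + e' / Real.log (T 1) := by
        gcongr
        exact mul_le_of_le_one_right (by positivity) hεR1
    _ = e := by
        simp only [e']
        field_simp

end

theorem stmt0_general (T : ℝ → ℝ)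
    (hmono : MonotoneOn T (Set.Ici 1))
    (hcont : ContinuousOn T (Set.Ici 1))
    (hT1 : 1 < T 1)
    (hliminf : LiminfZero fun r => Real.log (T r) / r)
    (δ : ℝ) (hδ0 : 0 < δ) (hδ1 : δ < 1 / 2)
    (φ : ℝ → ℝ)
    (hφ : ∀ r : ℝ, 1 ≤ r →
      φ r = sSup ((fun t => (t / Real.log (T t)) ^ δ) '' Set.Icc 1 r)) :
    ∃ (E : Set ℝ) (ε : ℝ → ℝ), E ⊆ Set.Ici 1 ∧ ZeroLowerDensity E ∧
      Filter.Tendsto ε Filter.atTop (nhds 0) ∧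
      ∀ r : ℝ, 1 ≤ r → r ∉ E →
        T r ≤ T (r + φ r) ∧ T (r + φ r) ≤ (1 + ε r) * T r := by
  have hT : ∀ t ∈ Set.Ici 1, 1 < T t := fun t ht => hT1.trans_le (hmono Set.self_mem_Ici ht ht)
  have hLpos : ∀ t ∈ Set.Ici 1, 0 < Real.log (T t) := fun t ht => Real.log_pos (hT t ht)
  have hLcont : ContinuousOn (fun t => Real.log (T t)) (Set.Ici 1) :=
    hcont.log fun t ht => (one_pos.trans (hT t ht)).ne'
  have hφ_mono : MonotoneOn φ (Set.Ici 1) := by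
    refine (monotoneOn_sSup_image_Icc ?_).congr fun r hr => (hφ r hr).symm
    exact ((continuousOn_id.div hLcont fun t ht => (hLpos t ht).ne').rpow_const
      fun _ _ => Or.inr hδ0.le)
  have hφ_nonneg : ∀ r ∈ Set.Ici 1, 0 ≤ φ r := fun r hr => (hφ r hr).symm ▸
    Real.sSup_nonneg (Set.forall_mem_image.2 fun t ht =>
      Real.rpow_nonneg (div_nonneg (by linarith [ht.1]) (hLpos t ht.1).le) δ)
  have hsmall : ∀ e > 0, ∃ᶠ R in atTop, φ R * Real.log (T R) / R < e := fun e he =>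
    ((frequently_sSup_rpow_mul_div_lt hLcont hLpos hδ0.le (by linarith) hliminf.1
      he).and_eventually (eventually_ge_atTop 1)).mono fun R ⟨hR, hR1⟩ => hφ R hR1 ▸ hR
  obtain ⟨ε, hε_anti, hε01, hε_lim, hε_freq⟩ :=
    exists_antitone_tendsto_zero_frequently_lt_mul hsmall
  refine ⟨exceptionalSet T φ ε, ε, fun x hx => hx.1, ⟨fun e he =>
    frequently_measureReal_exceptionalSet_inter_Icc_div_lt hmono hT1 hφ_mono hφ_nonneg hε_anti
      hε01 hε_freq he, fun e he => ?_⟩, hε_lim,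
    fun r hr hrE => ⟨?_, not_lt.1 fun h => hrE ⟨hr, h⟩⟩⟩
  · filter_upwards [eventually_gt_atTop 0] with R hR
    have : 0 ≤ (volume (exceptionalSet T φ ε ∩ Set.Icc 1 R)).toReal / R := by positivity
    linarith
  · have := hφ_nonneg r hr
    exact hmono hr (by simp only [Set.mem_Ici]; linarith) (by linarith)

/-- lemma on convex growth functions (liminf version, with φ). -/
theorem stmt0 (T : ℝ → ℝ)
    (hmono : MonotoneOn T (Set.Ici 1))
    (hpos : ∀ r : ℝ, 1 ≤ r → 0 < T r)
    (hconv : ConvexOn ℝ (Set.Ici 1) T)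
    (hcont : ContinuousOn T (Set.Ici 1))
    (hT1 : 1 < T 1)
    (hliminf : LiminfZero fun r => Real.log (T r) / r)
    (δ : ℝ) (hδ0 : 0 < δ) (hδ1 : δ < 1 / 2)
    (φ : ℝ → ℝ)
    (hφ : ∀ r : ℝ, 1 ≤ r →
      φ r = sSup ((fun t => (t / Real.log (T t)) ^ δ) '' Set.Icc 1 r)) :
    ∃ (E : Set ℝ) (ε : ℝ → ℝ), E ⊆ Set.Ici 1 ∧ ZeroLowerDensity E ∧
      Filter.Tendsto ε Filter.atTop (nhds 0) ∧
      ∀ r : ℝ, 1 ≤ r → r ∉ E →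
        T r ≤ T (r + φ r) ∧ T (r + φ r) ≤ (1 + ε r) * T r :=
  stmt0_general T hmono hcont hT1 hliminf δ hδ0 hδ1 φ hφ
end

section
/- Let T : [1,∞) → ℝ be a nondecreasing, positive, convex, continuous function with T(1) > 1 and liminf_{r→∞} (log T(r))/r = 0, and let c > 0 be a fixed real number. Then there exist a set E ⊂ [1,∞) of zero lower density and a function ε with ε(r) → 0 as r → ∞ such that T(r) ≤ T(r+c) ≤ (1+ε(r))·T(r) for all sufficiently large r ∈ [1,∞)∖E. -/
open Filter MeasureTheory Topology
open scoped Classical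

open TropNev Filter MeasureTheory Topology

/-!
Put `L r = log T r` and `h r = L (r + c) - L r ≥ 0`. Telescoping gives `∫₁ᴿ h ≤ c L (R + c)`, so by
Markov's inequality `{h ≥ δ} ∩ [1, R]` has measure at most `c L (R + c) / δ`. Choosing radii
`R_n → ∞` with `L (R_n + c) / R_n ≪ δ_n²` makes this `o(R_n)`; removing from each block
`(R_n, R_{n+1}]` the points where `h > δ_n` leaves a set of zero lower density off which `h → 0`,
that is, `T (r + c) / T r → 1`.
-/

open Set

theorem exists_monotone_tendsto_atTop_forall_of_frequently {p : ℕ → ℝ → Prop}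
    (h : ∀ n, ∃ᶠ x in atTop, p n x) :
    ∃ x : ℕ → ℝ, Monotone x ∧ Tendsto x atTop atTop ∧ ∀ n, p n (x n) := by
  simp only [frequently_atTop] at h
  choose u hu hpu using h
  let x : ℕ → ℝ := fun n => Nat.rec (u 0 0) (fun n v => u (n + 1) (v + 1)) n
  have hx_succ (n : ℕ) : x n + 1 ≤ x (n + 1) := hu (n + 1) _
  have hx_ge (n : ℕ) : x 0 + n ≤ x n := by
    induction n with
    | zero => simp
    | succ n ih => push_cast; linarith [hx_succ n]
  refine ⟨x, monotone_nat_of_le_succ fun n => by linarith [hx_succ n], ?_, ?_⟩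
  · exact tendsto_atTop_mono hx_ge
      (tendsto_atTop_add_const_left _ _ tendsto_natCast_atTop_atTop)
  · rintro (_ | n)
    exacts [hpu 0 0, hpu (n + 1) _]

theorem zeroLowerDensity_of_tendsto {E : Set ℝ} {R : ℕ → ℝ} (hR : Tendsto R atTop atTop)
    (hE : Tendsto (fun N => (volume (E ∩ Icc 1 (R N))).toReal / R N) atTop (𝓝 0)) :
    ZeroLowerDensity E := by
  refine ⟨fun ε hε => hR.frequently (hE.eventually (gt_mem_nhds hε)).frequently,
    fun ε hε => ?_⟩
  filter_upwards [eventually_gt_atTop 0] with r hr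
  exact (neg_neg_of_pos hε).trans_le (by positivity)

theorem exists_mem_Ioc_of_tendsto_atTop {R : ℕ → ℝ} (hR : Tendsto R atTop atTop) {r : ℝ}
    (hr : R 0 < r) : ∃ n, r ∈ Ioc (R n) (R (n + 1)) := by
  obtain ⟨N, hN⟩ := (hR.eventually_ge_atTop r).exists
  obtain ⟨n, -, hn⟩ := mem_iUnion₂.mp (Ioc_subset_biUnion_Ioc N R ⟨hr, hN⟩)
  exact ⟨n, hn⟩

theorem exists_zeroLowerDensity_tendsto_compl {h : ℝ → ℝ} (h_nonneg : ∀ x, 0 ≤ h x)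
    {R δ : ℕ → ℝ} (hR_mono : Monotone R) (hR : Tendsto R atTop atTop) (hδ_anti : Antitone δ)
    (hδ : Tendsto δ atTop (𝓝 0))
    (hvol : Tendsto (fun N => (volume ({x | δ N ≤ h x} ∩ Icc 1 (R N))).toReal / R N)
      atTop (𝓝 0)) :
    ∃ E ⊆ Ioi (R 0), ZeroLowerDensity E ∧ Tendsto h (atTop ⊓ 𝓟 Eᶜ) (𝓝 0) := by
  set E := ⋃ n, Ioc (R n) (R (n + 1)) ∩ {x | δ n < h x}
  have hE_sub : E ⊆ Ioi (R 0) := iUnion_subset fun n x hx =>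
    (hR_mono (Nat.zero_le n)).trans_lt hx.1.1
  refine ⟨E, hE_sub, zeroLowerDensity_of_tendsto hR ?_, ?_⟩
  · refine squeeze_zero' ?_ ?_ hvol <;> filter_upwards [hR.eventually_gt_atTop 0] with N hRN
    · positivity
    have hsub : E ∩ Icc 1 (R N) ⊆ {x | δ N ≤ h x} ∩ Icc 1 (R N) := by
      rintro x ⟨hxE, hx⟩
      obtain ⟨n, ⟨hxn, -⟩, hδx⟩ := mem_iUnion.mp hxE
      have hnN : n ≤ N := by
        by_contra! hNn
        exact (hx.2.trans (hR_mono hNn.le)).not_gt hxn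
      exact ⟨(hδ_anti hnN).trans hδx.le, hx⟩
    refine div_le_div_of_nonneg_right (ENNReal.toReal_mono ?_ (measure_mono hsub)) hRN.le
    exact ((measure_mono inter_subset_right).trans_lt (measure_Icc_lt_top (μ := volume))).ne
  · refine tendsto_order.2 ⟨fun a ha => Eventually.of_forall fun x => ha.trans_le (h_nonneg x),
      fun a ha => ?_⟩
    obtain ⟨N, hN⟩ := (hδ.eventually (gt_mem_nhds ha)).exists
    filter_upwards [(eventually_gt_atTop (R N)).filter_mono inf_le_left,
      mem_inf_of_right (mem_principal_self Eᶜ)] with x hxN hxE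
    obtain ⟨n, hxn⟩ := exists_mem_Ioc_of_tendsto_atTop hR ((hR_mono (Nat.zero_le N)).trans_lt hxN)
    have hNn : N ≤ n := by
      by_contra! hnN
      exact (hxn.2.trans (hR_mono hnN)).not_gt hxN
    have hxδ : h x ≤ δ n := not_lt.mp fun hlt => hxE (mem_iUnion.mpr ⟨n, hxn, hlt⟩)
    exact hxδ.trans_lt ((hδ_anti hNn).trans_lt hN)

theorem mul_volume_le_integral {h : ℝ → ℝ} (h_nonneg : ∀ x, 0 ≤ h x) {a b : ℝ} (hab : a ≤ b)
    (hi : IntervalIntegrable h volume a b) (δ : ℝ) :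
    δ * (volume ({x | δ ≤ h x} ∩ Icc a b)).toReal ≤ ∫ x in a..b, h x := by
  have := mul_meas_ge_le_integral_of_nonneg (μ := volume.restrict (Icc a b))
    (Eventually.of_forall h_nonneg) ((intervalIntegrable_iff_integrableOn_Icc_of_le hab).1 hi) δ
  rwa [measureReal_def, Measure.restrict_apply' measurableSet_Icc, integral_Icc_eq_integral_Ioc,
    ← intervalIntegral.integral_of_le hab] at this

theorem Monotone.integral_sub_comp_add_le {L : ℝ → ℝ} (hL : Monotone L) {a b c : ℝ}
    (ha : 0 ≤ L a) (hc : 0 ≤ c) :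
    ∫ x in a..b, (L (x + c) - L x) ≤ c * L (b + c) := by
  have hi : ∀ u v, IntervalIntegrable L volume u v := fun u v => hL.intervalIntegrable
  have hshift : ∫ x in a..b, (L (x + c) - L x)
      = (∫ x in b..b + c, L x) - ∫ x in a..a + c, L x := by
    have hLc : Monotone fun x => L (x + c) := fun x y hxy => hL (by linarith)
    rw [intervalIntegral.integral_sub hLc.intervalIntegrable (hi a b),
      intervalIntegral.integral_comp_add_right L c,
      intervalIntegral.integral_interval_sub_interval_comm' (hi _ _) (hi _ _) (hi _ _)]
  have hupper : ∫ x in b..b + c, L x ≤ c * L (b + c) := by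
    simpa using intervalIntegral.integral_mono_on (by linarith) (hi b (b + c))
      intervalIntegrable_const fun x hx => hL hx.2
  have hlower : 0 ≤ ∫ x in a..a + c, L x :=
    intervalIntegral.integral_nonneg (by linarith) fun x hx => ha.trans (hL hx.1)
  linarith

theorem Monotone.volume_setOf_le_sub_comp_add_le {L : ℝ → ℝ} (hL : Monotone L) {a b c δ : ℝ}
    (ha : 0 ≤ L a) (hab : a ≤ b) (hc : 0 ≤ c) (hδ : 0 < δ) :
    (volume ({x | δ ≤ L (x + c) - L x} ∩ Icc a b)).toReal ≤ c * L (b + c) / δ := by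
  have hLc : Monotone fun x => L (x + c) := fun x y hxy => hL (by linarith)
  rw [le_div_iff₀' hδ]
  exact (mul_volume_le_integral (fun x => sub_nonneg.2 (hL (by linarith))) hab
    (hLc.intervalIntegrable.sub hL.intervalIntegrable) δ).trans
    (hL.integral_sub_comp_add_le ha hc)

theorem Monotone.volume_setOf_le_sub_comp_add_div_le {L : ℝ → ℝ} (hL : Monotone L)
    (hL1 : 0 ≤ L 1) {c δ r : ℝ} (hc : 0 ≤ c) (hδ : 0 < δ) (hr : 2 * c + 1 ≤ r) :
    (volume ({x | δ ≤ L (x + c) - L x} ∩ Icc 1 (r - c))).toReal / (r - c)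
      ≤ 2 * c / δ * (L r / r) := by
  have hvol := hL.volume_setOf_le_sub_comp_add_le hL1 (by linarith : 1 ≤ r - c) hc hδ
  rw [sub_add_cancel] at hvol
  have hLr : 0 ≤ L r := hL1.trans (hL (by linarith))
  calc _ ≤ c * L r / δ / (r - c) := by gcongr; linarith
    _ ≤ c * L r / δ / (r / 2) := by gcongr <;> linarith
    _ = 2 * c / δ * (L r / r) := by field_simp

theorem Monotone.exists_zeroLowerDensity_tendsto_sub_comp_add {L : ℝ → ℝ} (hL : Monotone L)
    (hL1 : 0 ≤ L 1) (hfreq : ∀ ε > 0, ∃ᶠ r in atTop, L r / r < ε) {c : ℝ} (hc : 0 ≤ c) :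
    ∃ E ⊆ Ici 1, ZeroLowerDensity E ∧
      Tendsto (fun r => L (r + c) - L r) (atTop ⊓ 𝓟 Eᶜ) (𝓝 0) := by
  set δ : ℕ → ℝ := fun n => 1 / ((n : ℝ) + 1)
  have hδ_pos (n : ℕ) : 0 < δ n := by positivity
  have hδ : Tendsto δ atTop (𝓝 0) := tendsto_one_div_add_atTop_nhds_zero_nat
  obtain ⟨Q, hQ_mono, hQ_top, hQ⟩ := exists_monotone_tendsto_atTop_forall_of_frequently
    (p := fun n r => 2 * c + 1 ≤ r ∧ L r / r < δ n ^ 2)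
    fun n => ((hfreq _ (by positivity)).and_eventually (eventually_ge_atTop _)).mono
      fun r hr => ⟨hr.2, hr.1⟩
  have hratio (N : ℕ) : (volume ({x | δ N ≤ L (x + c) - L x} ∩ Icc 1 (Q N - c))).toReal
      / (Q N - c) ≤ 2 * c * δ N := by
    refine (hL.volume_setOf_le_sub_comp_add_div_le hL1 hc (hδ_pos N) (hQ N).1).trans ?_
    calc 2 * c / δ N * (L (Q N) / Q N) ≤ 2 * c / δ N * δ N ^ 2 := by gcongr; exact (hQ N).2.le
      _ = 2 * c * δ N := by field_simp
  obtain ⟨E, hE_sub, hE_density, hE⟩ := exists_zeroLowerDensity_tendsto_compl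
    (fun x => sub_nonneg.2 (hL (by linarith))) (R := fun n => Q n - c)
    (fun m n hmn => sub_le_sub_right (hQ_mono hmn) c) (tendsto_atTop_add_const_right _ (-c) hQ_top)
    (fun m n hmn => one_div_le_one_div_of_le (by positivity) (by gcongr))
    hδ (squeeze_zero' (Eventually.of_forall fun N =>
      div_nonneg ENNReal.toReal_nonneg (by linarith [(hQ N).1])) (Eventually.of_forall hratio)
      (by simpa using hδ.const_mul (2 * c)))
  refine ⟨E, hE_sub.trans fun r hr => ?_, hE_density, hE⟩
  exact mem_Ici.2 (by linarith [(hQ 0).1, mem_Ioi.mp hr])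

theorem stmt1_general (T : ℝ → ℝ)
    (hmono : MonotoneOn T (Set.Ici 1))
    (hpos : ∀ r : ℝ, 1 ≤ r → 0 < T r)
    (hT1 : 1 < T 1)
    (hliminf : LiminfZero fun r => Real.log (T r) / r)
    (c : ℝ) (hc : 0 < c) :
    ∃ (E : Set ℝ) (ε : ℝ → ℝ), E ⊆ Set.Ici 1 ∧ ZeroLowerDensity E ∧
      Filter.Tendsto ε Filter.atTop (nhds 0) ∧
      ∃ r₀ : ℝ, ∀ r : ℝ, r₀ ≤ r → r ∉ E →
        T r ≤ T (r + c) ∧ T (r + c) ≤ (1 + ε r) * T r := by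
  set L : ℝ → ℝ := fun r => Real.log (T (max r 1))
  have hL : Monotone L := fun x y hxy => Real.log_le_log (hpos _ (le_max_right x 1))
    (hmono (le_max_right x 1) (le_max_right y 1) (max_le_max_right 1 hxy))
  have hL1 : 0 ≤ L 1 := Real.log_nonneg (by simpa [L] using hT1.le)
  have hfreq (ε : ℝ) (hε : 0 < ε) : ∃ᶠ r in atTop, L r / r < ε :=
    ((hliminf.1 ε hε).and_eventually (eventually_ge_atTop 1)).mono fun r hr => by
      simpa only [L, max_eq_left hr.2] using hr.1
  obtain ⟨E, hE_sub, hE_density, hE⟩ :=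
    hL.exists_zeroLowerDensity_tendsto_sub_comp_add hL1 hfreq hc.le
  have hε : Tendsto (fun r => Real.exp (L (r + c) - L r) - 1) (atTop ⊓ 𝓟 Eᶜ) (𝓝 0) := by
    have := ((Real.continuous_exp.tendsto 0).comp hE).sub_const 1
    rwa [Real.exp_zero, sub_self] at this
  have hT_shift (r : ℝ) (hr : 1 ≤ r) : Real.exp (L (r + c) - L r) * T r = T (r + c) := by
    simp only [L, max_eq_left hr, max_eq_left (by linarith : 1 ≤ r + c), Real.exp_sub,
      Real.exp_log (hpos _ hr), Real.exp_log (hpos (r + c) (by linarith))]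
    exact div_mul_cancel₀ _ (hpos r hr).ne'
  refine ⟨E, E.piecewise 0 fun r => Real.exp (L (r + c) - L r) - 1, hE_sub, hE_density,
    tendsto_const_nhds.piecewise hε, 1, fun r hr hrE => ⟨hmono hr (by linarith : 1 ≤ r + c)
      (by linarith), ?_⟩⟩
  rw [piecewise_eq_of_notMem _ _ _ hrE, add_sub_cancel, hT_shift r hr]

/-- lemma on convex growth functions (liminf version, fixed shift c). -/
theorem stmt1 (T : ℝ → ℝ)
    (hmono : MonotoneOn T (Set.Ici 1))
    (hpos : ∀ r : ℝ, 1 ≤ r → 0 < T r)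
    (hconv : ConvexOn ℝ (Set.Ici 1) T)
    (hcont : ContinuousOn T (Set.Ici 1))
    (hT1 : 1 < T 1)
    (hliminf : LiminfZero fun r => Real.log (T r) / r)
    (c : ℝ) (hc : 0 < c) :
    ∃ (E : Set ℝ) (ε : ℝ → ℝ), E ⊆ Set.Ici 1 ∧ ZeroLowerDensity E ∧
      Filter.Tendsto ε Filter.atTop (nhds 0) ∧
      ∃ r₀ : ℝ, ∀ r : ℝ, r₀ ≤ r → r ∉ E →
        T r ≤ T (r + c) ∧ T (r + c) ≤ (1 + ε r) * T r :=
  stmt1_general T hmono hpos hT1 hliminf c hc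
end

section
/- Let c ∈ ℝ∖{0} and let f be a tropical meromorphic function with limsup_{r→∞} (log T(r,f))/r = 0. Then m(r, f(·+c) ⊘ f) = o(T(r,f)) as r → ∞ outside a set of zero upper density, where f(·+c) ⊘ f denotes the tropical meromorphic function x ↦ f(x+c) − f(x). -/
open Filter MeasureTheory Topology
open scoped Classical

open TropNev Filter MeasureTheory Topology
open TropNev Set

namespace Stmt3Aux

noncomputable def dR (f : ℝ → ℝ) (x : ℝ) : ℝ := derivWithin f (Set.Ici x) x
noncomputable def dL (f : ℝ → ℝ) (x : ℝ) : ℝ := derivWithin f (Set.Iic x) x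

lemma omega_eq (f : ℝ → ℝ) (x : ℝ) : omega f x = dR f x - dL f x := rfl

lemma affine_hasDeriv (C s x : ℝ) : HasDerivAt (fun t : ℝ => C + s * (t - x)) s x := by
  have h := (((hasDerivAt_id x).sub_const x).const_mul s).const_add C
  simpa using h

lemma dR_eq {f : ℝ → ℝ} {x s ε : ℝ} (hε : 0 < ε)
    (h : ∀ t ∈ Icc x (x + ε), f t = f x + s * (t - x)) : dR f x = s := by
  have hA : HasDerivWithinAt (fun t : ℝ => f x + s * (t - x)) s (Ici x) x :=
    (affine_hasDeriv (f x) s x).hasDerivWithinAt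
  have hmem : Icc x (x + ε) ∈ nhdsWithin x (Ici x) :=
    Icc_mem_nhdsGE_of_mem ⟨le_refl x, by linarith⟩
  have heq : f =ᶠ[nhdsWithin x (Ici x)] (fun t : ℝ => f x + s * (t - x)) :=
    Filter.eventuallyEq_of_mem hmem (fun t ht => h t ht)
  have : HasDerivWithinAt f s (Ici x) x :=
    hA.congr_of_eventuallyEq heq (by simp)
  exact this.derivWithin (uniqueDiffOn_Ici x x Set.self_mem_Ici)

lemma dL_eq {f : ℝ → ℝ} {x s ε : ℝ} (hε : 0 < ε)
    (h : ∀ t ∈ Icc (x - ε) x, f t = f x + s * (t - x)) : dL f x = s := by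
  have hA : HasDerivWithinAt (fun t : ℝ => f x + s * (t - x)) s (Iic x) x :=
    (affine_hasDeriv (f x) s x).hasDerivWithinAt
  have hmem : Icc (x - ε) x ∈ nhdsWithin x (Iic x) :=
    Icc_mem_nhdsLE_of_mem ⟨by linarith, le_refl x⟩
  have heq : f =ᶠ[nhdsWithin x (Iic x)] (fun t : ℝ => f x + s * (t - x)) :=
    Filter.eventuallyEq_of_mem hmem (fun t ht => h t ht)
  have : HasDerivWithinAt f s (Iic x) x :=
    hA.congr_of_eventuallyEq heq (by simp)
  exact this.derivWithin (uniqueDiffOn_Iic x x Set.self_mem_Iic)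

lemma local_affine {f : ℝ → ℝ} (hf : IsTropMero f) (x : ℝ) :
    ∃ ε > (0:ℝ), (∀ t ∈ Icc x (x + ε), f t = f x + dR f x * (t - x)) ∧
      (∀ t ∈ Icc (x - ε) x, f t = f x + dL f x * (t - x)) := by
  obtain ⟨ε, hε, s1, s2, h1, h2⟩ := hf.2 x
  refine ⟨ε, hε, ?_, ?_⟩
  · rw [dR_eq hε h1]; exact h1
  · rw [dL_eq hε h2]; exact h2

lemma slopes_of_affineOn {f : ℝ → ℝ} {u v s : ℝ} (huv : u < v)
    (h : ∀ t ∈ Icc u v, f t = f u + s * (t - u)) :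
    dR f u = s ∧ dL f v = s ∧ ∀ y ∈ Ioo u v, dR f y = s ∧ dL f y = s := by
  have hfv : f v = f u + s * (v - u) := h v ⟨le_of_lt huv, le_refl v⟩
  refine ⟨?_, ?_, ?_⟩
  · refine dR_eq (s := s) (ε := v - u) (by linarith) (fun t ht => h t ?_)
    constructor
    · exact ht.1
    · have := ht.2; linarith
  · refine dL_eq (s := s) (ε := v - u) (by linarith) (fun t ht => ?_)
    have h1 : f t = f u + s * (t - u) := h t ⟨by linarith [ht.1], ht.2⟩
    rw [h1, hfv]; ring
  · intro y hy
    constructor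
    · refine dR_eq (s := s) (ε := v - y) (by linarith [hy.2]) (fun t ht => ?_)
      have h1 : f t = f u + s * (t - u) := h t ⟨by linarith [hy.1, ht.1], by linarith [ht.2]⟩
      have h2 : f y = f u + s * (y - u) := h y ⟨le_of_lt hy.1, le_of_lt hy.2⟩
      rw [h1, h2]; ring
    · refine dL_eq (s := s) (ε := y - u) (by linarith [hy.1]) (fun t ht => ?_)
      have h1 : f t = f u + s * (t - u) := h t ⟨by linarith [ht.1], by linarith [ht.2, hy.2]⟩
      have h2 : f y = f u + s * (y - u) := h y ⟨le_of_lt hy.1, le_of_lt hy.2⟩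
      rw [h1, h2]; ring

/-- the jump set of `f` is locally finite -/
lemma finite_jumps {f : ℝ → ℝ} (hf : IsTropMero f) (u v : ℝ) :
    {b : ℝ | b ∈ Icc u v ∧ omega f b ≠ 0}.Finite := by
  classical
  choose ε hε hR hL using fun x : ℝ => local_affine hf x
  have hiso : ∀ x : ℝ, ∀ y ∈ Ioo (x - ε x) (x + ε x), y ≠ x → omega f y = 0 := by
    intro x y hy hyx
    rcases lt_or_gt_of_ne hyx with hlt | hgt
    · -- y < x : use left piece on [x-ε, x]
      have h := slopes_of_affineOn (f := f) (u := x - ε x) (v := x) (s := dL f x)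
        (by linarith [hε x]) (fun t ht => by
          have := hL x t ht
          have hx2 : f (x - ε x) = f x + dL f x * ((x - ε x) - x) :=
            hL x _ ⟨le_refl _, by linarith [hε x]⟩
          rw [this, hx2]; ring)
      have hy' : y ∈ Ioo (x - ε x) x := ⟨hy.1, hlt⟩
      obtain ⟨_, _, h3⟩ := h
      obtain ⟨e1, e2⟩ := h3 y hy'
      rw [omega_eq, e1, e2, sub_self]
    · have h := slopes_of_affineOn (f := f) (u := x) (v := x + ε x)
        (by linarith [hε x]) (fun t ht => hR x t ht)
      have hy' : y ∈ Ioo x (x + ε x) := ⟨hgt, hy.2⟩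
      obtain ⟨_, _, h3⟩ := h
      obtain ⟨e1, e2⟩ := h3 y hy'
      rw [omega_eq, e1, e2, sub_self]
  obtain ⟨t, ht⟩ := isCompact_Icc.elim_finite_subcover
    (fun x : ℝ => Ioo (x - ε x) (x + ε x)) (fun x => isOpen_Ioo)
    (fun x hx => mem_iUnion.2 ⟨x, by constructor <;> simp <;> linarith [hε x]⟩)
  · refine Set.Finite.subset t.finite_toSet (fun b hb => ?_)
    obtain ⟨hbI, hbω⟩ := hb
    have := ht hbI
    simp only [mem_iUnion] at this
    obtain ⟨x, hxt, hbx⟩ := this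
    by_cases hbx' : b = x
    · subst hbx'; exact hxt
    · exact absurd (hiso x b hbx hbx') hbω

noncomputable def jFinset {f : ℝ → ℝ} (hf : IsTropMero f) (u v : ℝ) : Finset ℝ :=
  (finite_jumps hf u v).toFinset

lemma mem_jFinset {f : ℝ → ℝ} (hf : IsTropMero f) {u v b : ℝ} :
    b ∈ jFinset hf u v ↔ b ∈ Icc u v ∧ omega f b ≠ 0 := by
  simp [jFinset, Set.Finite.mem_toFinset]

noncomputable def JIoc {f : ℝ → ℝ} (hf : IsTropMero f) (a x : ℝ) : Finset ℝ :=
  (jFinset hf a x).filter (fun b => b ∈ Ioc a x)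

lemma mem_JIoc {f : ℝ → ℝ} (hf : IsTropMero f) {a x b : ℝ} :
    b ∈ JIoc hf a x ↔ b ∈ Ioc a x ∧ omega f b ≠ 0 := by
  simp only [JIoc, Finset.mem_filter, mem_jFinset]
  constructor
  · rintro ⟨⟨_, h2⟩, h3⟩; exact ⟨h3, h2⟩
  · rintro ⟨h1, h2⟩; exact ⟨⟨⟨le_of_lt h1.1, h1.2⟩, h2⟩, h1⟩


lemma affine_of_no_jump {f : ℝ → ℝ} (hf : IsTropMero f) {a x : ℝ} (hax : a ≤ x)
    (hno : ∀ b ∈ Ioo a x, omega f b = 0) :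
    ∀ t ∈ Icc a x, f t = f a + dR f a * (t - a) := by
  rcases eq_or_lt_of_le hax with rfl | hax'
  · intro t ht; have : t = a := le_antisymm ht.2 ht.1; subst this; ring
  set s := dR f a with hs
  set A := {t : ℝ | t ∈ Icc a x ∧ ∀ u ∈ Icc a t, f u = f a + s * (u - a)} with hA
  have hA_a : a ∈ A := by
    refine ⟨⟨le_refl a, hax⟩, fun u hu => ?_⟩
    have : u = a := le_antisymm hu.2 hu.1; subst this; ring
  have hbdd : BddAbove A := ⟨x, fun t ht => ht.1.2⟩
  have hne : A.Nonempty := ⟨a, hA_a⟩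
  set m := sSup A with hm
  have ham : a ≤ m := le_csSup hbdd hA_a
  have hmx : m ≤ x := csSup_le hne (fun t ht => ht.1.2)
  have key : ∀ u ∈ Ico a m, f u = f a + s * (u - a) := by
    intro u hu
    obtain ⟨t, htA, hut⟩ := exists_lt_of_lt_csSup hne hu.2
    exact htA.2 u ⟨hu.1, le_of_lt hut⟩
  have hm_val : f m = f a + s * (m - a) := by
    rcases eq_or_lt_of_le ham with heq' | ham'
    · rw [← heq']; ring
    · have heq : Set.EqOn f (fun u => f a + s * (u - a)) (Ico a m) := fun u hu => key u hu
      have hcl : Set.EqOn f (fun u => f a + s * (u - a)) (closure (Ico a m)) :=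
        heq.closure hf.1 (continuous_const.add (continuous_const.mul (continuous_id.sub continuous_const)))
      have : m ∈ closure (Ico a m) := by
        rw [closure_Ico (ne_of_lt ham')]; exact ⟨ham, le_refl m⟩
      exact hcl this
  have hmA : m ∈ A := by
    refine ⟨⟨ham, hmx⟩, fun u hu => ?_⟩
    rcases lt_or_eq_of_le hu.2 with h | h
    · exact key u ⟨hu.1, h⟩
    · subst h; exact hm_val
  have hmx' : m = x := by
    by_contra hne'
    have hmltx : m < x := lt_of_le_of_ne hmx hne'
    obtain ⟨ε, hε, hRm, hLm⟩ := local_affine hf m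
    have hdRm : dR f m = s := by
      rcases eq_or_lt_of_le ham with heq' | ham'
      · rw [← heq']
      · have hdLm : dL f m = s := by
          refine dL_eq (s := s) (ε := m - a) (by linarith) (fun t ht => ?_)
          have h1 : f t = f a + s * (t - a) := hmA.2 t ⟨by linarith [ht.1], ht.2⟩
          rw [h1, hm_val]; ring
        have hom : omega f m = 0 := hno m ⟨ham', hmltx⟩
        rw [omega_eq] at hom
        have : dR f m = dL f m := by linarith
        rw [this, hdLm]
      -- (a = m case gives dR f m = dR f a = s by rfl)
    set m' := min (m + ε) x with hm'
    have hmm' : m < m' := lt_min (by linarith) hmltx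
    have hm'A : m' ∈ A := by
      refine ⟨⟨by linarith, min_le_right _ _⟩, fun u hu => ?_⟩
      rcases le_or_gt u m with h | h
      · exact hmA.2 u ⟨hu.1, h⟩
      · have hu2 : u ∈ Icc m (m + ε) := ⟨le_of_lt h, le_trans hu.2 (min_le_left _ _)⟩
        have := hRm u hu2
        rw [this, hm_val, hdRm]; ring
    have : m' ≤ m := le_csSup hbdd hm'A
    linarith
  intro t ht
  exact hmA.2 t (by rw [hmx']; exact ht)

lemma dL_of_affine_left {f : ℝ → ℝ} {a x : ℝ} (hax : a < x)
    (haff : ∀ t ∈ Icc a x, f t = f a + dR f a * (t - a)) : dL f x = dR f a := by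
  refine dL_eq (s := dR f a) (ε := x - a) (by linarith) (fun t ht => ?_)
  have h1 : f t = f a + dR f a * (t - a) := haff t ⟨by linarith [ht.1], ht.2⟩
  have h2 : f x = f a + dR f a * (x - a) := haff x ⟨le_of_lt hax, le_refl x⟩
  rw [h1, h2]; ring

/-- Main structure identity: value and slope after crossing jumps. -/
lemma I1aux {f : ℝ → ℝ} (hf : IsTropMero f) : ∀ n : ℕ, ∀ a x : ℝ, a ≤ x →
    (JIoc hf a x).card = n →
    (f x = f a + dR f a * (x - a) + ∑ b ∈ JIoc hf a x, omega f b * (x - b)) ∧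
    dR f x = dR f a + ∑ b ∈ JIoc hf a x, omega f b := by
  intro n
  induction n with
  | zero =>
    intro a x hax hcard
    have hempty : JIoc hf a x = ∅ := Finset.card_eq_zero.1 hcard
    have hno : ∀ b ∈ Ioo a x, omega f b = 0 := by
      intro b hb
      by_contra hωb
      have : b ∈ JIoc hf a x := (mem_JIoc hf).2 ⟨⟨hb.1, le_of_lt hb.2⟩, hωb⟩
      rw [hempty] at this; exact absurd this (Finset.notMem_empty b)
    have haff := affine_of_no_jump hf hax hno
    rw [hempty]
    simp only [Finset.sum_empty, add_zero]
    refine ⟨haff x ⟨hax, le_refl x⟩, ?_⟩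
    rcases eq_or_lt_of_le hax with rfl | hax'
    · rfl
    · have hdL := dL_of_affine_left hax' haff
      have hωx : omega f x = 0 := by
        by_contra hωx
        have : x ∈ JIoc hf a x := (mem_JIoc hf).2 ⟨⟨hax', le_refl x⟩, hωx⟩
        rw [hempty] at this; exact absurd this (Finset.notMem_empty x)
      rw [omega_eq] at hωx
      linarith [hdL]
  | succ n ih =>
    intro a x hax hcard
    have hne : (JIoc hf a x).Nonempty := Finset.card_pos.1 (by omega)
    set b₀ := (JIoc hf a x).min' hne with hb₀def
    have hb₀mem := (JIoc hf a x).min'_mem hne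
    obtain ⟨hb₀Ioc, hb₀ω⟩ := (mem_JIoc hf).1 hb₀mem
    have hmin : ∀ b ∈ JIoc hf a x, b₀ ≤ b := fun b hb => (JIoc hf a x).min'_le b hb
    have hnoIoo : ∀ y ∈ Ioo a b₀, omega f y = 0 := by
      intro y hy
      by_contra hωy
      have hmem : y ∈ JIoc hf a x :=
        (mem_JIoc hf).2 ⟨⟨hy.1, le_trans (le_of_lt hy.2) hb₀Ioc.2⟩, hωy⟩
      linarith [hmin y hmem, hy.2]
    have haff := affine_of_no_jump hf (le_of_lt hb₀Ioc.1) hnoIoo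
    have hval : f b₀ = f a + dR f a * (b₀ - a) := haff b₀ ⟨le_of_lt hb₀Ioc.1, le_refl b₀⟩
    have hdL : dL f b₀ = dR f a := dL_of_affine_left hb₀Ioc.1 haff
    have hdR : dR f b₀ = dR f a + omega f b₀ := by
      rw [omega_eq, hdL]; ring
    have hsplit : JIoc hf a x = insert b₀ (JIoc hf b₀ x) := by
      ext u
      simp only [mem_JIoc, Finset.mem_insert]
      constructor
      · rintro ⟨hu1, hu2⟩
        by_cases h : u = b₀
        · exact Or.inl h
        · refine Or.inr ⟨⟨?_, hu1.2⟩, hu2⟩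
          have : b₀ ≤ u := hmin u ((mem_JIoc hf).2 ⟨hu1, hu2⟩)
          exact lt_of_le_of_ne this (Ne.symm h)
      · rintro (rfl | ⟨hu1, hu2⟩)
        · exact ⟨hb₀Ioc, hb₀ω⟩
        · exact ⟨⟨lt_trans hb₀Ioc.1 hu1.1, hu1.2⟩, hu2⟩
    have hb₀not : b₀ ∉ JIoc hf b₀ x := by
      intro h; exact absurd ((mem_JIoc hf).1 h).1.1 (lt_irrefl b₀)
    have hcard' : (JIoc hf b₀ x).card = n := by
      have := hcard
      rw [hsplit, Finset.card_insert_of_notMem hb₀not] at this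
      omega
    obtain ⟨ihval, ihslope⟩ := ih b₀ x hb₀Ioc.2 hcard'
    constructor
    · rw [hsplit, Finset.sum_insert hb₀not, ihval, hval, hdR]; ring
    · rw [hsplit, Finset.sum_insert hb₀not, ihslope, hdR]; ring

lemma I1 {f : ℝ → ℝ} (hf : IsTropMero f) {a x : ℝ} (hax : a ≤ x) :
    (f x = f a + dR f a * (x - a) + ∑ b ∈ JIoc hf a x, omega f b * (x - b)) ∧
    dR f x = dR f a + ∑ b ∈ JIoc hf a x, omega f b :=
  I1aux hf _ a x hax rfl


lemma max_neg_zero (t : ℝ) : max (-t) 0 = max t 0 - t := by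
  rcases le_total t 0 with h | h
  · rw [max_eq_left (by linarith), max_eq_right h]; ring
  · rw [max_eq_right (by linarith), max_eq_left h]; ring

lemma abs_eq_maxmax (t : ℝ) : |t| = max t 0 + max (-t) 0 := by
  rcases le_total t 0 with h | h
  · rw [abs_of_nonpos h, max_eq_right h, max_eq_left (by linarith)]; ring
  · rw [abs_of_nonneg h, max_eq_left h, max_eq_right (by linarith)]; ring

lemma term_eq (f : ℝ → ℝ) (b r : ℝ) :
    (if |b| < r ∧ omega f b < 0 then -omega f b * (r - |b|) else 0)
      = max (-omega f b) 0 * max (r - |b|) 0 := by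
  split_ifs with h
  · rw [max_eq_left (by linarith [h.2]), max_eq_left (by linarith [h.1])]
  · push_neg at h
    rcases lt_or_ge (|b|) r with h1 | h1
    · have h2 := h h1
      rw [show max (-omega f b) 0 = 0 from max_eq_right (by linarith), zero_mul]
    · rw [show max (r - |b|) 0 = 0 from max_eq_right (by linarith), mul_zero]

lemma countN_eq_sum {f : ℝ → ℝ} (hf : IsTropMero f) {r : ℝ} (F : Finset ℝ)
    (hF : ∀ b, |b| < r → omega f b ≠ 0 → b ∈ F) :
    countN f r = (1/2) * ∑ b ∈ F, max (-omega f b) 0 * max (r - |b|) 0 := by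
  unfold countN
  congr 1
  rw [tsum_eq_sum (s := F) ?_]
  · exact Finset.sum_congr rfl (fun b _ => term_eq f b r)
  · intro b hb
    split_ifs with h
    · exact absurd (hF b h.1 (ne_of_lt h.2)) hb
    · rfl

lemma countN_nonneg {f : ℝ → ℝ} (hf : IsTropMero f) (r : ℝ) : 0 ≤ countN f r := by
  rw [countN_eq_sum hf (jFinset hf (-r) r)
    (fun b hb hω => (mem_jFinset hf).2 ⟨⟨by cases abs_lt.1 hb; linarith, le_of_lt (lt_of_abs_lt hb)⟩, hω⟩)]
  have : ∀ b ∈ jFinset hf (-r) r, 0 ≤ max (-omega f b) 0 * max (r - |b|) 0 :=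
    fun b _ => mul_nonneg (le_max_right _ _) (le_max_right _ _)
  have := Finset.sum_nonneg this
  linarith

lemma countN_mono {f : ℝ → ℝ} (hf : IsTropMero f) {r₁ r₂ : ℝ} (h : r₁ ≤ r₂) :
    countN f r₁ ≤ countN f r₂ := by
  have hF2 : ∀ b, |b| < r₂ → omega f b ≠ 0 → b ∈ jFinset hf (-r₂) r₂ :=
    fun b hb hω => (mem_jFinset hf).2 ⟨⟨by cases abs_lt.1 hb; linarith, le_of_lt (lt_of_abs_lt hb)⟩, hω⟩
  have hF1 : ∀ b, |b| < r₁ → omega f b ≠ 0 → b ∈ jFinset hf (-r₂) r₂ :=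
    fun b hb hω => hF2 b (lt_of_lt_of_le hb h) hω
  rw [countN_eq_sum hf _ hF1, countN_eq_sum hf _ hF2]
  have : ∀ b ∈ jFinset hf (-r₂) r₂,
      max (-omega f b) 0 * max (r₁ - |b|) 0 ≤ max (-omega f b) 0 * max (r₂ - |b|) 0 := by
    intro b _
    exact mul_le_mul_of_nonneg_left (max_le_max (by linarith) (le_refl 0)) (le_max_right _ _)
  have := Finset.sum_le_sum this
  linarith

lemma countN_ge_single {f : ℝ → ℝ} (hf : IsTropMero f) (b₀ r : ℝ) :
    (1/2) * (max (-omega f b₀) 0 * max (r - |b₀|) 0) ≤ countN f r := by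
  set F := insert b₀ (jFinset hf (-r) r) with hF
  have hFc : ∀ b, |b| < r → omega f b ≠ 0 → b ∈ F := fun b hb hω =>
    Finset.mem_insert_of_mem ((mem_jFinset hf).2
      ⟨⟨by cases abs_lt.1 hb; linarith, le_of_lt (lt_of_abs_lt hb)⟩, hω⟩)
  rw [countN_eq_sum hf F hFc]
  have hsingle : max (-omega f b₀) 0 * max (r - |b₀|) 0
      ≤ ∑ b ∈ F, max (-omega f b) 0 * max (r - |b|) 0 :=
    Finset.single_le_sum (f := fun b => max (-omega f b) 0 * max (r - |b|) 0)
      (fun b _ => mul_nonneg (le_max_right _ _) (le_max_right _ _))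
      (Finset.mem_insert_self b₀ _)
  linarith

lemma tropmero_neg {f : ℝ → ℝ} (hf : IsTropMero f) : IsTropMero (fun x => -f x) := by
  refine ⟨hf.1.neg, fun x => ?_⟩
  obtain ⟨ε, hε, s1, s2, h1, h2⟩ := hf.2 x
  refine ⟨ε, hε, -s1, -s2, fun t ht => ?_, fun t ht => ?_⟩
  · show -f t = -f x + -s1 * (t - x)
    rw [h1 t ht]; ring
  · show -f t = -f x + -s2 * (t - x)
    rw [h2 t ht]; ring

lemma omega_neg {f : ℝ → ℝ} (hf : IsTropMero f) (x : ℝ) :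
    omega (fun y => -f y) x = -omega f x := by
  obtain ⟨ε, hε, h1, h2⟩ := local_affine hf x
  have e1 : dR (fun y => -f y) x = -dR f x :=
    dR_eq hε (fun t ht => by
      show -f t = -f x + -dR f x * (t - x)
      rw [h1 t ht]; ring)
  have e2 : dL (fun y => -f y) x = -dL f x :=
    dL_eq hε (fun t ht => by
      show -f t = -f x + -dL f x * (t - x)
      rw [h2 t ht]; ring)
  rw [omega_eq, omega_eq, e1, e2]; ring

lemma countNroots_eq_sum {f : ℝ → ℝ} (hf : IsTropMero f) {r : ℝ} (F : Finset ℝ)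
    (hF : ∀ b, |b| < r → omega f b ≠ 0 → b ∈ F) :
    countNroots f r = (1/2) * ∑ b ∈ F, max (omega f b) 0 * max (r - |b|) 0 := by
  have hF' : ∀ b, |b| < r → omega (fun x => -f x) b ≠ 0 → b ∈ F := by
    intro b hb hω
    rw [omega_neg hf] at hω
    exact hF b hb (fun h => hω (by rw [h, neg_zero]))
  rw [show countNroots f = countN (fun x => -f x) from rfl,
    countN_eq_sum (tropmero_neg hf) F hF']
  congr 1
  refine Finset.sum_congr rfl (fun b _ => ?_)
  rw [omega_neg hf, neg_neg]

lemma countNroots_nonneg {f : ℝ → ℝ} (hf : IsTropMero f) (r : ℝ) : 0 ≤ countNroots f r :=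
  countN_nonneg (tropmero_neg hf) r

lemma countNroots_mono {f : ℝ → ℝ} (hf : IsTropMero f) {r₁ r₂ : ℝ} (h : r₁ ≤ r₂) :
    countNroots f r₁ ≤ countNroots f r₂ :=
  countN_mono (tropmero_neg hf) h

lemma countNroots_ge_single {f : ℝ → ℝ} (hf : IsTropMero f) (b₀ r : ℝ) :
    (1/2) * (max (omega f b₀) 0 * max (r - |b₀|) 0) ≤ countNroots f r := by
  have := countN_ge_single (tropmero_neg hf) b₀ r
  rw [omega_neg hf, neg_neg] at this
  exact this

/-- Tropical Jensen formula. -/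
lemma jensen {f : ℝ → ℝ} (hf : IsTropMero f) {r : ℝ} (hr : 0 ≤ r) :
    f r + f (-r) - 2 * f 0 = 2 * countNroots f r - 2 * countN f r := by
  have hrr : -r ≤ r := by linarith
  have hr0 : -r ≤ 0 := by linarith
  obtain ⟨e1, _⟩ := I1 hf hrr
  obtain ⟨e2, _⟩ := I1 hf hr0
  set J1 := JIoc hf (-r) r with hJ1
  set J2 := JIoc hf (-r) 0 with hJ2
  have hsub : J2 ⊆ J1 := by
    intro b hb
    obtain ⟨h1, h2⟩ := (mem_JIoc hf).1 hb
    exact (mem_JIoc hf).2 ⟨⟨h1.1, le_trans h1.2 hr⟩, h2⟩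
  -- f r + f(-r) - 2 f 0 = Σ_{J1} ω (r - b) - 2 Σ_{J2} ω (0 - b)
  have estep : f r + f (-r) - 2 * f 0
      = ∑ b ∈ J1, omega f b * (r - b) - 2 * ∑ b ∈ J2, omega f b * (0 - b) := by
    rw [e1, e2]; ring
  -- rewrite the J2 sum inside J1
  have hJ2sum : ∑ b ∈ J2, omega f b * (0 - b)
      = ∑ b ∈ J1, (if b ∈ J2 then omega f b * (0 - b) else 0) := by
    rw [Finset.sum_ite_mem, Finset.inter_eq_right.2 hsub]
  have hmerge : ∑ b ∈ J1, omega f b * (r - b)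
      - 2 * ∑ b ∈ J1, (if b ∈ J2 then omega f b * (0 - b) else 0)
      = ∑ b ∈ J1, omega f b * (r - |b|) := by
    rw [Finset.mul_sum, ← Finset.sum_sub_distrib]
    refine Finset.sum_congr rfl (fun b hb => ?_)
    obtain ⟨hbIoc, hbω⟩ := (mem_JIoc hf).1 hb
    by_cases h2 : b ∈ J2
    · have hble : b ≤ 0 := ((mem_JIoc hf).1 h2).1.2
      rw [if_pos h2, abs_of_nonpos hble]; ring
    · have hbpos : 0 < b := by
        by_contra hb0
        push_neg at hb0
        exact h2 ((mem_JIoc hf).2 ⟨⟨hbIoc.1, hb0⟩, hbω⟩)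
      rw [if_neg h2, abs_of_pos hbpos]; ring
  have hsplitsum : ∑ b ∈ J1, omega f b * (r - |b|)
      = ∑ b ∈ J1, max (omega f b) 0 * max (r - |b|) 0
        - ∑ b ∈ J1, max (-omega f b) 0 * max (r - |b|) 0 := by
    rw [← Finset.sum_sub_distrib]
    refine Finset.sum_congr rfl (fun b hb => ?_)
    obtain ⟨hbIoc, hbω⟩ := (mem_JIoc hf).1 hb
    have habs : |b| ≤ r := by
      rw [abs_le]; exact ⟨le_of_lt hbIoc.1, hbIoc.2⟩
    rw [max_eq_left (by linarith : (0:ℝ) ≤ r - |b|), max_neg_zero]; ring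
  have hFc : ∀ b, |b| < r → omega f b ≠ 0 → b ∈ J1 := fun b hb hω =>
    (mem_JIoc hf).2 ⟨⟨(abs_lt.1 hb).1, le_of_lt (lt_of_abs_lt hb)⟩, hω⟩
  have hN := countN_eq_sum hf J1 hFc
  have hNr := countNroots_eq_sum hf J1 hFc
  rw [estep, hJ2sum, hmerge, hsplitsum, hN, hNr]; ring

lemma jensen2 {f : ℝ → ℝ} (hf : IsTropMero f) {r : ℝ} (hr : 0 ≤ r) :
    countNroots f r - countN f r = (f r + f (-r)) / 2 - f 0 := by
  have := jensen hf hr; linarith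


lemma prox_nonneg (g : ℝ → ℝ) (r : ℝ) : 0 ≤ prox g r := by
  unfold prox
  have h1 : (0:ℝ) ≤ max (g r) 0 := le_max_right _ _
  have h2 : (0:ℝ) ≤ max (g (-r)) 0 := le_max_right _ _
  linarith

lemma f_le_prox (f : ℝ → ℝ) (r : ℝ) : (f r + f (-r)) / 2 ≤ prox f r := by
  unfold prox
  have h1 : f r ≤ max (f r) 0 := le_max_left _ _
  have h2 : f (-r) ≤ max (f (-r)) 0 := le_max_left _ _
  linarith

lemma prox_neg_eq (f : ℝ → ℝ) (r : ℝ) :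
    prox (fun x => -f x) r = prox f r - (f r + f (-r)) / 2 := by
  unfold prox
  simp only []
  rw [max_neg_zero (f r), max_neg_zero (f (-r))]
  ring

lemma charT_nonneg {f : ℝ → ℝ} (hf : IsTropMero f) (r : ℝ) : 0 ≤ charT f r :=
  add_nonneg (prox_nonneg f r) (countN_nonneg hf r)

lemma countN_le_charT {f : ℝ → ℝ} (hf : IsTropMero f) (r : ℝ) : countN f r ≤ charT f r := by
  unfold charT; linarith [prox_nonneg f r]

lemma countNroots_le_charT {f : ℝ → ℝ} (hf : IsTropMero f) {r : ℝ} (hr : 0 ≤ r) :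
    countNroots f r ≤ charT f r - f 0 := by
  have h := jensen2 hf hr
  have h2 := f_le_prox f r
  unfold charT; linarith

lemma prox_neg_le {f : ℝ → ℝ} (hf : IsTropMero f) {r : ℝ} (hr : 0 ≤ r) :
    prox (fun x => -f x) r ≤ charT f r - f 0 := by
  rw [prox_neg_eq]
  have h := jensen2 hf hr
  have h2 := countNroots_nonneg hf r
  unfold charT; linarith

lemma abs_f_le {f : ℝ → ℝ} (hf : IsTropMero f) {r : ℝ} (hr : 0 ≤ r) :
    |f r| ≤ 4 * charT f r + 2 * |f 0| ∧ |f (-r)| ≤ 4 * charT f r + 2 * |f 0| := by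
  have hp := prox_nonneg f r
  have hn := prox_neg_le hf hr
  have hN := countN_nonneg hf r
  have hT : prox f r ≤ charT f r := by unfold charT; linarith
  have hf0 : -f 0 ≤ |f 0| := neg_le_abs _
  constructor
  · rw [abs_eq_maxmax]
    have h1 : max (f r) 0 ≤ 2 * prox f r := by
      unfold prox
      have : (0:ℝ) ≤ max (f (-r)) 0 := le_max_right _ _
      linarith
    have h2 : max (-f r) 0 ≤ 2 * prox (fun x => -f x) r := by
      unfold prox
      have : (0:ℝ) ≤ max (-f (-r)) 0 := le_max_right _ _
      simp only [] at *
      linarith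
    linarith
  · rw [abs_eq_maxmax]
    have h1 : max (f (-r)) 0 ≤ 2 * prox f r := by
      unfold prox
      have h' : (0:ℝ) ≤ max (f r) 0 := le_max_right _ _
      linarith
    have h2 : max (-f (-r)) 0 ≤ 2 * prox (fun x => -f x) r := by
      unfold prox
      have h' : (0:ℝ) ≤ max (-f r) 0 := le_max_right _ _
      simp only [] at *
      linarith
    linarith

/-- local structure of the positive part f⁺ = max(f, 0). -/
lemma pos_part_piece {f : ℝ → ℝ} (hf : IsTropMero f) (x : ℝ) :
    ∃ ε > (0:ℝ), ∃ sR' sL' : ℝ,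
      (∀ t ∈ Icc x (x + ε), max (f t) 0 = max (f x) 0 + sR' * (t - x)) ∧
      (∀ t ∈ Icc (x - ε) x, max (f t) 0 = max (f x) 0 + sL' * (t - x)) ∧
      ((f x ≠ 0 → (sR' = dR f x ∧ sL' = dL f x) ∨ (sR' = 0 ∧ sL' = 0)) ∧
       (f x = 0 → sR' = max (dR f x) 0 ∧ sL' = min (dL f x) 0)) := by
  obtain ⟨ε, hε, hR, hL⟩ := local_affine hf x
  rcases lt_trichotomy (f x) 0 with hneg | hzero | hpos
  · -- f < 0 near x, pos part vanishes
    have hopen : {t : ℝ | f t < 0} ∈ nhds x := by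
      have : IsOpen {t : ℝ | f t < 0} := isOpen_lt hf.1 continuous_const
      exact this.mem_nhds hneg
    obtain ⟨δ, hδ, hball⟩ := Metric.mem_nhds_iff.1 hopen
    refine ⟨min ε (δ/2), lt_min hε (by linarith), 0, 0, fun t ht => ?_, fun t ht => ?_, ?_, ?_⟩
    · have htf : f t < 0 := hball (by
        simp only [Metric.mem_ball, Real.dist_eq]
        have h1 := ht.1; have h2 := ht.2
        rw [abs_lt]; constructor <;> [linarith [lt_min hε (show (0:ℝ) < δ/2 by linarith)]; skip]
        · have : t ≤ x + min ε (δ/2) := ht.2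
          have : min ε (δ/2) ≤ δ/2 := min_le_right _ _
          linarith)
      rw [max_eq_right (le_of_lt htf), max_eq_right (le_of_lt hneg)]; ring
    · have htf : f t < 0 := hball (by
        simp only [Metric.mem_ball, Real.dist_eq]
        have h1 := ht.1; have h2 := ht.2
        have hm : min ε (δ/2) ≤ δ/2 := min_le_right _ _
        rw [abs_lt]; constructor <;> linarith)
      rw [max_eq_right (le_of_lt htf), max_eq_right (le_of_lt hneg)]; ring
    · intro _; exact Or.inr ⟨rfl, rfl⟩
    · intro h; exact absurd h (ne_of_lt hneg)
  · -- f x = 0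
    refine ⟨ε, hε, max (dR f x) 0, min (dL f x) 0, fun t ht => ?_, fun t ht => ?_, ?_, ?_⟩
    · have htf : f t = dR f x * (t - x) := by rw [hR t ht, hzero]; ring
      rw [htf, hzero]
      have htx : 0 ≤ t - x := by linarith [ht.1]
      rcases le_total 0 (dR f x) with hs | hs
      · rw [max_eq_left hs, max_eq_left (mul_nonneg hs htx), max_eq_right (le_refl 0)]; ring
      · rw [max_eq_right hs, max_eq_right (mul_nonpos_of_nonpos_of_nonneg hs htx),
          max_eq_right (le_refl 0)]; ring
    · have htf : f t = dL f x * (t - x) := by rw [hL t ht, hzero]; ring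
      rw [htf, hzero]
      have htx : t - x ≤ 0 := by linarith [ht.2]
      rcases le_total 0 (dL f x) with hs | hs
      · rw [min_eq_right hs, max_eq_right (mul_nonpos_of_nonneg_of_nonpos hs htx),
          max_eq_right (le_refl 0)]; ring
      · rw [min_eq_left hs, max_eq_left (by nlinarith [mul_nonneg (neg_nonneg.2 hs) (neg_nonneg.2 htx)]),
          max_eq_right (le_refl 0)]; ring
    · intro h; exact absurd hzero h
    · intro _; exact ⟨rfl, rfl⟩
  · -- f x > 0
    have hopen : {t : ℝ | 0 < f t} ∈ nhds x := by
      have : IsOpen {t : ℝ | 0 < f t} := isOpen_lt continuous_const hf.1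
      exact this.mem_nhds hpos
    obtain ⟨δ, hδ, hball⟩ := Metric.mem_nhds_iff.1 hopen
    refine ⟨min ε (δ/2), lt_min hε (by linarith), dR f x, dL f x, fun t ht => ?_, fun t ht => ?_, ?_, ?_⟩
    · have htf : 0 < f t := hball (by
        simp only [Metric.mem_ball, Real.dist_eq]
        have h1 := ht.1; have h2 := ht.2
        have hm : min ε (δ/2) ≤ δ/2 := min_le_right _ _
        rw [abs_lt]; constructor <;> linarith)
      have ht' : t ∈ Icc x (x + ε) := ⟨ht.1, le_trans ht.2 (by linarith [min_le_left ε (δ/2)])⟩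
      rw [max_eq_left (le_of_lt htf), max_eq_left (le_of_lt hpos)]
      exact hR t ht'
    · have htf : 0 < f t := hball (by
        simp only [Metric.mem_ball, Real.dist_eq]
        have h1 := ht.1; have h2 := ht.2
        have hm : min ε (δ/2) ≤ δ/2 := min_le_right _ _
        rw [abs_lt]; constructor <;> linarith)
      have ht' : t ∈ Icc (x - ε) x := ⟨le_trans (by linarith [min_le_left ε (δ/2)]) ht.1, ht.2⟩
      rw [max_eq_left (le_of_lt htf), max_eq_left (le_of_lt hpos)]
      exact hL t ht'
    · intro _; exact Or.inl ⟨rfl, rfl⟩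
    · intro h; exact absurd h (ne_of_gt hpos)

lemma tropmero_pos {f : ℝ → ℝ} (hf : IsTropMero f) : IsTropMero (fun x => max (f x) 0) := by
  refine ⟨hf.1.max continuous_const, fun x => ?_⟩
  obtain ⟨ε, hε, sR', sL', h1, h2, _⟩ := pos_part_piece hf x
  exact ⟨ε, hε, sR', sL', h1, h2⟩

lemma pole_le {f : ℝ → ℝ} (hf : IsTropMero f) (b : ℝ) :
    max (-omega (fun x => max (f x) 0) b) 0 ≤ max (-omega f b) 0 := by
  obtain ⟨ε, hε, sR', sL', h1, h2, hcase⟩ := pos_part_piece hf b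
  have e1 : dR (fun x => max (f x) 0) b = sR' := dR_eq hε h1
  have e2 : dL (fun x => max (f x) 0) b = sL' := dL_eq hε h2
  have homega : omega (fun x => max (f x) 0) b = sR' - sL' := by rw [omega_eq, e1, e2]
  by_cases hz : f b = 0
  · obtain ⟨c1, c2⟩ := hcase.2 hz
    have : 0 ≤ sR' - sL' := by
      rw [c1, c2]
      have := le_max_right (dR f b) 0
      have := min_le_right (dL f b) 0
      linarith
    rw [homega]
    rw [max_eq_right (by linarith)]
    exact le_max_right _ _
  · rcases hcase.1 hz with ⟨c1, c2⟩ | ⟨c1, c2⟩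
    · rw [homega, c1, c2, ← omega_eq]
    · rw [homega, c1, c2, sub_self, neg_zero, max_self]
      exact le_max_right _ _

lemma charT_eq {f : ℝ → ℝ} (hf : IsTropMero f) {r : ℝ} (hr : 0 ≤ r) :
    charT f r = max (f 0) 0 + countNroots (fun x => max (f x) 0) r
      + (countN f r - countN (fun x => max (f x) 0) r) := by
  have hj := jensen2 (tropmero_pos hf) hr
  have hpr : (max (f r) 0 + max (f (-r)) 0) / 2 = prox f r := rfl
  unfold charT
  linarith [hj, hpr]

lemma charT_mono {f : ℝ → ℝ} (hf : IsTropMero f) {r₁ r₂ : ℝ} (h0 : 0 ≤ r₁) (h : r₁ ≤ r₂) :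
    charT f r₁ ≤ charT f r₂ := by
  rw [charT_eq hf h0, charT_eq hf (le_trans h0 h)]
  have hh := tropmero_pos hf
  have m1 : countNroots (fun x => max (f x) 0) r₁ ≤ countNroots (fun x => max (f x) 0) r₂ :=
    countNroots_mono hh h
  -- difference part
  set F := jFinset hf (-r₂) r₂ ∪ jFinset hh (-r₂) r₂ with hFdef
  have hFf : ∀ ρ, ρ ≤ r₂ → ∀ b, |b| < ρ → omega f b ≠ 0 → b ∈ F := by
    intro ρ hρ b hb hω
    refine Finset.mem_union_left _ ((mem_jFinset hf).2 ⟨?_, hω⟩)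
    have := lt_of_lt_of_le hb hρ
    cases abs_lt.1 this
    constructor <;> linarith
  have hFh : ∀ ρ, ρ ≤ r₂ → ∀ b, |b| < ρ → omega (fun x => max (f x) 0) b ≠ 0 → b ∈ F := by
    intro ρ hρ b hb hω
    refine Finset.mem_union_right _ ((mem_jFinset hh).2 ⟨?_, hω⟩)
    have := lt_of_lt_of_le hb hρ
    cases abs_lt.1 this
    constructor <;> linarith
  rw [countN_eq_sum hf F (hFf r₁ h), countN_eq_sum hf F (hFf r₂ (le_refl _)),
    countN_eq_sum hh F (hFh r₁ h), countN_eq_sum hh F (hFh r₂ (le_refl _))]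
  have hsum : ∑ b ∈ F, (max (-omega f b) 0 * max (r₁ - |b|) 0
        - max (-omega (fun x => max (f x) 0) b) 0 * max (r₁ - |b|) 0)
      ≤ ∑ b ∈ F, (max (-omega f b) 0 * max (r₂ - |b|) 0
        - max (-omega (fun x => max (f x) 0) b) 0 * max (r₂ - |b|) 0) := by
    refine Finset.sum_le_sum (fun b _ => ?_)
    have hd := pole_le hf b
    rw [← sub_mul, ← sub_mul]
    refine mul_le_mul_of_nonneg_left (max_le_max (by linarith) (le_refl 0)) (by linarith)
  rw [Finset.sum_sub_distrib, Finset.sum_sub_distrib] at hsum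
  linarith [hsum, m1]


lemma sum_omega_bound {f : ℝ → ℝ} {J G : Finset ℝ} (hJG : J ⊆ G) (w : ℝ → ℝ) {M : ℝ}
    (hM : 0 ≤ M) (hw : ∀ b ∈ J, |w b| ≤ M) :
    |∑ b ∈ J, omega f b * w b| ≤ M * ∑ b ∈ G, |omega f b| := by
  calc |∑ b ∈ J, omega f b * w b| ≤ ∑ b ∈ J, |omega f b * w b| :=
        Finset.abs_sum_le_sum_abs _ _
    _ = ∑ b ∈ J, |omega f b| * |w b| := Finset.sum_congr rfl (fun b _ => abs_mul _ _)
    _ ≤ ∑ b ∈ J, |omega f b| * M :=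
        Finset.sum_le_sum (fun b hb => mul_le_mul_of_nonneg_left (hw b hb) (abs_nonneg _))
    _ = M * ∑ b ∈ J, |omega f b| := by rw [← Finset.sum_mul]; ring
    _ ≤ M * ∑ b ∈ G, |omega f b| :=
        mul_le_mul_of_nonneg_left
          (Finset.sum_le_sum_of_subset_of_nonneg hJG (fun b _ _ => abs_nonneg _)) hM

set_option maxHeartbeats 1000000 in
/-- Main estimate: the proximity function of the difference quotient. -/
lemma main_est {f : ℝ → ℝ} (hf : IsTropMero f) {c r s : ℝ} (hc : c ≠ 0)
    (h1r : 1 ≤ r) (h1s : 1 ≤ s) (hsr : s ≤ r) :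
    prox (fun x => f (x + c) - f x) r
      ≤ (16 * (|c| + 1) / s) * (charT f (r + |c| + s) + |f 0| + 1) := by
  set a := |c| with ha
  have ha0 : 0 < a := abs_pos.2 hc
  set ρ := r + a with hρ
  have hρpos : 0 < ρ := by positivity
  set R' := r + a + s with hR'
  have hρR' : ρ ≤ R' := by rw [hρ, hR']; linarith
  have hR0 : (0:ℝ) ≤ R' := by rw [hR']; positivity
  set Ω := ∑ b ∈ jFinset hf (-ρ) ρ, |omega f b| with hΩdef
  have hΩ0 : 0 ≤ Ω := Finset.sum_nonneg (fun b _ => abs_nonneg _)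
  set T' := charT f R' with hT'
  have hT'0 : 0 ≤ T' := charT_nonneg hf R'
  -- Ω bound
  have hΩ : Ω * s ≤ 4 * T' + 2 * |f 0| := by
    have hsub : jFinset hf (-ρ) ρ ⊆ jFinset hf (-R') R' := by
      intro b hb
      obtain ⟨hbI, hbω⟩ := (mem_jFinset hf).1 hb
      exact (mem_jFinset hf).2 ⟨⟨by linarith [hbI.1], by linarith [hbI.2]⟩, hbω⟩
    have hstep1 : Ω * s ≤ ∑ b ∈ jFinset hf (-ρ) ρ, |omega f b| * max (R' - |b|) 0 := by
      rw [hΩdef, Finset.sum_mul]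
      refine Finset.sum_le_sum (fun b hb => ?_)
      obtain ⟨hbI, _⟩ := (mem_jFinset hf).1 hb
      have habs : |b| ≤ ρ := abs_le.2 ⟨hbI.1, hbI.2⟩
      have : s ≤ max (R' - |b|) 0 := le_max_of_le_left (by rw [hR']; rw [hρ] at habs; linarith)
      exact mul_le_mul_of_nonneg_left this (abs_nonneg _)
    have hstep2 : ∑ b ∈ jFinset hf (-ρ) ρ, |omega f b| * max (R' - |b|) 0
        ≤ ∑ b ∈ jFinset hf (-R') R', |omega f b| * max (R' - |b|) 0 :=
      Finset.sum_le_sum_of_subset_of_nonneg hsub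
        (fun b _ _ => mul_nonneg (abs_nonneg _) (le_max_right _ _))
    have hFc : ∀ b, |b| < R' → omega f b ≠ 0 → b ∈ jFinset hf (-R') R' := fun b hb hω =>
      (mem_jFinset hf).2 ⟨⟨(abs_lt.1 hb).1.le, (abs_lt.1 hb).2.le⟩, hω⟩
    have hsplit : ∑ b ∈ jFinset hf (-R') R', |omega f b| * max (R' - |b|) 0
        = 2 * countNroots f R' + 2 * countN f R' := by
      have key : ∑ b ∈ jFinset hf (-R') R', |omega f b| * max (R' - |b|) 0
          = ∑ b ∈ jFinset hf (-R') R',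
              (max (omega f b) 0 * max (R' - |b|) 0 + max (-omega f b) 0 * max (R' - |b|) 0) :=
        Finset.sum_congr rfl (fun b _ => by rw [abs_eq_maxmax, add_mul])
      rw [countNroots_eq_sum hf _ hFc, countN_eq_sum hf _ hFc, key, Finset.sum_add_distrib]
      ring
    have hb1 : countN f R' ≤ T' := countN_le_charT hf R'
    have hb2 : countNroots f R' ≤ T' + |f 0| := by
      have := countNroots_le_charT hf hR0
      have h0 := neg_le_abs (f 0)
      rw [← hT'] at this
      linarith
    calc Ω * s ≤ 2 * countNroots f R' + 2 * countN f R' := by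
          rw [hsplit] at hstep2; linarith
      _ ≤ 4 * T' + 2 * |f 0| := by linarith
  -- values bound
  have hvρ := abs_f_le hf (le_of_lt hρpos)
  have hvalsum : |f ρ| + |f (-ρ)| ≤ 8 * T' + 4 * |f 0| := by
    have hTm : charT f ρ ≤ T' := by rw [hT']; exact charT_mono hf (le_of_lt hρpos) hρR'
    obtain ⟨v1, v2⟩ := hvρ
    have hTρ0 := charT_nonneg hf ρ
    linarith
  -- base slope bound
  have hbase : |dR f (-ρ)| * (2*ρ) ≤ |f ρ| + |f (-ρ)| + 2 * ρ * Ω := by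
    have hle : -ρ ≤ ρ := by linarith
    obtain ⟨e1, _⟩ := I1 hf hle
    have hsubJ : JIoc hf (-ρ) ρ ⊆ jFinset hf (-ρ) ρ := by
      intro b hb
      obtain ⟨hbI, hbω⟩ := (mem_JIoc hf).1 hb
      exact (mem_jFinset hf).2 ⟨⟨le_of_lt hbI.1, hbI.2⟩, hbω⟩
    have hSb : |∑ b ∈ JIoc hf (-ρ) ρ, omega f b * (ρ - b)| ≤ (2*ρ) * Ω := by
      refine sum_omega_bound (M := 2*ρ) hsubJ (fun b => ρ - b) (by linarith) (fun b hb => ?_)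
      obtain ⟨hbI, _⟩ := (mem_JIoc hf).1 hb
      rw [abs_of_nonneg (by linarith [hbI.2] : (0:ℝ) ≤ ρ - b)]
      linarith [hbI.1]
    have he : dR f (-ρ) * (2*ρ) = f ρ - f (-ρ) - ∑ b ∈ JIoc hf (-ρ) ρ, omega f b * (ρ - b) := by
      rw [e1]; ring
    calc |dR f (-ρ)| * (2*ρ) = |dR f (-ρ) * (2*ρ)| := by
          rw [abs_mul, abs_of_nonneg (by linarith : (0:ℝ) ≤ 2*ρ)]
      _ = |f ρ - f (-ρ) - ∑ b ∈ JIoc hf (-ρ) ρ, omega f b * (ρ - b)| := by rw [he]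
      _ ≤ |f ρ| + |f (-ρ)| + |∑ b ∈ JIoc hf (-ρ) ρ, omega f b * (ρ - b)| := by
          have h2 := abs_add_le (f ρ - f (-ρ)) (-(∑ b ∈ JIoc hf (-ρ) ρ, omega f b * (ρ - b)))
          rw [abs_neg] at h2
          have h3 := abs_add_le (f ρ) (-(f (-ρ)))
          rw [abs_neg] at h3
          have h4 : |f ρ - f (-ρ)| ≤ |f ρ| + |f (-ρ)| := by
            rw [sub_eq_add_neg]; exact h3
          have h5 : |f ρ - f (-ρ) - ∑ b ∈ JIoc hf (-ρ) ρ, omega f b * (ρ - b)|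
              ≤ |f ρ - f (-ρ)| + |∑ b ∈ JIoc hf (-ρ) ρ, omega f b * (ρ - b)| := by
            rw [sub_eq_add_neg (f ρ - f (-ρ))]; exact h2
          linarith
      _ ≤ |f ρ| + |f (-ρ)| + 2*ρ*Ω := by linarith [hSb]
  -- slope anywhere
  have hslope : ∀ y, -ρ ≤ y → y ≤ ρ → |dR f y| * (2*ρ) ≤ |f ρ| + |f (-ρ)| + 4 * ρ * Ω := by
    intro y hy1 hy2
    obtain ⟨_, e2⟩ := I1 hf hy1
    have hsubJ : JIoc hf (-ρ) y ⊆ jFinset hf (-ρ) ρ := by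
      intro b hb
      obtain ⟨hbI, hbω⟩ := (mem_JIoc hf).1 hb
      exact (mem_jFinset hf).2 ⟨⟨le_of_lt hbI.1, le_trans hbI.2 hy2⟩, hbω⟩
    have hS : |∑ b ∈ JIoc hf (-ρ) y, omega f b| ≤ Ω := by
      calc |∑ b ∈ JIoc hf (-ρ) y, omega f b| ≤ ∑ b ∈ JIoc hf (-ρ) y, |omega f b| :=
            Finset.abs_sum_le_sum_abs _ _
        _ ≤ Ω := Finset.sum_le_sum_of_subset_of_nonneg hsubJ (fun b _ _ => abs_nonneg _)
    have habs : |dR f y| ≤ |dR f (-ρ)| + Ω := by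
      rw [e2]
      calc |dR f (-ρ) + ∑ b ∈ JIoc hf (-ρ) y, omega f b|
          ≤ |dR f (-ρ)| + |∑ b ∈ JIoc hf (-ρ) y, omega f b| := abs_add_le _ _
        _ ≤ |dR f (-ρ)| + Ω := by linarith
    have h2ρ : (0:ℝ) ≤ 2*ρ := by linarith
    calc |dR f y| * (2*ρ) ≤ (|dR f (-ρ)| + Ω) * (2*ρ) := mul_le_mul_of_nonneg_right habs h2ρ
      _ = |dR f (-ρ)| * (2*ρ) + Ω * (2*ρ) := by ring
      _ ≤ |f ρ| + |f (-ρ)| + 2*ρ*Ω + Ω*(2*ρ) := by linarith [hbase]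
      _ = |f ρ| + |f (-ρ)| + 4*ρ*Ω := by ring
  -- difference bound
  have hdiff : ∀ x : ℝ, |x| ≤ r →
      |f (x + c) - f x| * (2*ρ) ≤ a * (|f ρ| + |f (-ρ)|) + 6*a*ρ*Ω := by
    intro x hx
    obtain ⟨hx1, hx2⟩ := abs_le.1 hx
    have hcc : -a ≤ c ∧ c ≤ a := abs_le.1 (le_refl a)
    have h2ρ : (0:ℝ) ≤ 2*ρ := by linarith
    rcases lt_or_gt_of_ne hc with hcneg | hcpos
    · -- c < 0, use interval [x+c, x]
      have hle : x + c ≤ x := by linarith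
      obtain ⟨e3, _⟩ := I1 hf hle
      have hy1 : -ρ ≤ x + c := by rw [hρ]; linarith [hcc.1]
      have hy2 : x + c ≤ ρ := by rw [hρ]; linarith
      have hsubJ : JIoc hf (x+c) x ⊆ jFinset hf (-ρ) ρ := by
        intro b hb
        obtain ⟨hbI, hbω⟩ := (mem_JIoc hf).1 hb
        refine (mem_jFinset hf).2 ⟨⟨?_, ?_⟩, hbω⟩
        · linarith [hbI.1]
        · have := hbI.2; rw [hρ]; linarith
      have hS : |∑ b ∈ JIoc hf (x+c) x, omega f b * (x - b)| ≤ a * Ω := by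
        refine sum_omega_bound (M := a) hsubJ (fun b => x - b) (le_of_lt ha0) (fun b hb => ?_)
        obtain ⟨hbI, _⟩ := (mem_JIoc hf).1 hb
        rw [abs_of_nonneg (by linarith [hbI.2] : (0:ℝ) ≤ x - b)]
        linarith [hbI.1, hcc.1]
      have heq : f (x + c) - f x = -(dR f (x+c) * (x - (x+c))) -
          ∑ b ∈ JIoc hf (x+c) x, omega f b * (x - b) := by
        rw [e3]; ring
      have habs : |f (x + c) - f x| ≤ |dR f (x+c)| * a + a * Ω := by
        rw [heq]
        have t1 : |(-(dR f (x+c) * (x - (x+c)))) - ∑ b ∈ JIoc hf (x+c) x, omega f b * (x - b)|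
            ≤ |dR f (x+c) * (x - (x+c))| + |∑ b ∈ JIoc hf (x+c) x, omega f b * (x - b)| := by
          rw [sub_eq_add_neg]
          exact (abs_add_le _ _).trans_eq (by rw [abs_neg, abs_neg])
        have t2 : |dR f (x+c) * (x - (x+c))| ≤ |dR f (x+c)| * a := by
          rw [abs_mul]
          refine mul_le_mul_of_nonneg_left ?_ (abs_nonneg _)
          rw [abs_of_nonneg (by linarith : (0:ℝ) ≤ x - (x+c))]
          linarith [hcc.1]
        linarith
      have hsl := hslope (x+c) hy1 hy2
      calc |f (x + c) - f x| * (2*ρ) ≤ (|dR f (x+c)| * a + a * Ω) * (2*ρ) :=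
            mul_le_mul_of_nonneg_right habs h2ρ
        _ = (|dR f (x+c)| * (2*ρ)) * a + a * Ω * (2*ρ) := by ring
        _ ≤ (|f ρ| + |f (-ρ)| + 4*ρ*Ω) * a + a * Ω * (2*ρ) := by
            have := mul_le_mul_of_nonneg_right hsl (le_of_lt ha0)
            linarith
        _ = a * (|f ρ| + |f (-ρ)|) + 6*a*ρ*Ω := by ring
    · -- c > 0, use interval [x, x+c]
      have hle : x ≤ x + c := by linarith
      obtain ⟨e3, _⟩ := I1 hf hle
      have hy1 : -ρ ≤ x := by rw [hρ]; linarith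
      have hy2 : x ≤ ρ := by rw [hρ]; linarith
      have hsubJ : JIoc hf x (x+c) ⊆ jFinset hf (-ρ) ρ := by
        intro b hb
        obtain ⟨hbI, hbω⟩ := (mem_JIoc hf).1 hb
        refine (mem_jFinset hf).2 ⟨⟨?_, ?_⟩, hbω⟩
        · linarith [hbI.1]
        · have := hbI.2; rw [hρ]; linarith [hcc.2]
      have hS : |∑ b ∈ JIoc hf x (x+c), omega f b * (x + c - b)| ≤ a * Ω := by
        refine sum_omega_bound (M := a) hsubJ (fun b => x + c - b) (le_of_lt ha0) (fun b hb => ?_)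
        obtain ⟨hbI, _⟩ := (mem_JIoc hf).1 hb
        rw [abs_of_nonneg (by linarith [hbI.2] : (0:ℝ) ≤ x + c - b)]
        linarith [hbI.1, hcc.2]
      have heq : f (x + c) - f x = dR f x * (x + c - x) +
          ∑ b ∈ JIoc hf x (x+c), omega f b * (x + c - b) := by
        rw [e3]; ring
      have habs : |f (x + c) - f x| ≤ |dR f x| * a + a * Ω := by
        rw [heq]
        have t1 := abs_add_le (dR f x * (x + c - x)) (∑ b ∈ JIoc hf x (x+c), omega f b * (x + c - b))
        have t2 : |dR f x * (x + c - x)| ≤ |dR f x| * a := by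
          rw [abs_mul]
          refine mul_le_mul_of_nonneg_left ?_ (abs_nonneg _)
          rw [abs_of_nonneg (by linarith : (0:ℝ) ≤ x + c - x)]
          linarith [hcc.2]
        linarith
      have hsl := hslope x hy1 hy2
      calc |f (x + c) - f x| * (2*ρ) ≤ (|dR f x| * a + a * Ω) * (2*ρ) :=
            mul_le_mul_of_nonneg_right habs h2ρ
        _ = (|dR f x| * (2*ρ)) * a + a * Ω * (2*ρ) := by ring
        _ ≤ (|f ρ| + |f (-ρ)| + 4*ρ*Ω) * a + a * Ω * (2*ρ) := by
            have := mul_le_mul_of_nonneg_right hsl (le_of_lt ha0)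
            linarith
        _ = a * (|f ρ| + |f (-ρ)|) + 6*a*ρ*Ω := by ring
  -- combine
  set B := 4 * T' + 2 * |f 0| with hB
  have hB0 : 0 ≤ B := by positivity
  have hgb : ∀ x : ℝ, |x| ≤ r → |f (x + c) - f x| * s ≤ 4 * a * B := by
    intro x hx
    have h1 := hdiff x hx
    have hsρ : s ≤ ρ := by rw [hρ]; linarith
    have hΩρ : Ω * s ≤ B := hΩ
    -- multiply h1 by s and use Ω*s ≤ B, |fρ|+|f(-ρ)| ≤ 2B
    have h2 : |f (x + c) - f x| * (2*ρ) * s ≤ a * (2*B) * s + 6*a*ρ*B := by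
      have e1 : a * (|f ρ| + |f (-ρ)|) * s ≤ a * (2*B) * s := by
        have : |f ρ| + |f (-ρ)| ≤ 2 * B := by rw [hB]; linarith [hvalsum]
        have := mul_le_mul_of_nonneg_right
          (mul_le_mul_of_nonneg_left this (le_of_lt ha0)) (by linarith : (0:ℝ) ≤ s)
        linarith
      have e2 : 6*a*ρ*Ω*s ≤ 6*a*ρ*B := by
        have h6 : (0:ℝ) ≤ 6*a*ρ := by positivity
        calc 6*a*ρ*Ω*s = (6*a*ρ) * (Ω*s) := by ring
          _ ≤ (6*a*ρ) * B := mul_le_mul_of_nonneg_left hΩρ h6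
          _ = 6*a*ρ*B := by ring
      have := mul_le_mul_of_nonneg_right h1 (by linarith : (0:ℝ) ≤ s)
      calc |f (x + c) - f x| * (2*ρ) * s
          ≤ (a * (|f ρ| + |f (-ρ)|) + 6*a*ρ*Ω) * s := this
        _ = a * (|f ρ| + |f (-ρ)|) * s + 6*a*ρ*Ω*s := by ring
        _ ≤ a * (2*B) * s + 6*a*ρ*B := by linarith
    have h3 : a * (2*B) * s + 6*a*ρ*B ≤ 8*a*B*ρ := by
      have hsρ' : a * (2*B) * s ≤ a * (2*B) * ρ :=
        mul_le_mul_of_nonneg_left hsρ (by positivity)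
      nlinarith
    have h4 : |f (x + c) - f x| * (2*ρ) * s ≤ 8*a*B*ρ := le_trans h2 h3
    -- divide by 2ρ
    nlinarith [abs_nonneg (f (x + c) - f x), hρpos]
  have hgr := hgb r (by rw [abs_of_nonneg (by linarith : (0:ℝ) ≤ r)])
  have hgnr := hgb (-r) (by rw [abs_neg, abs_of_nonneg (by linarith : (0:ℝ) ≤ r)])
  have hprox : prox (fun x => f (x + c) - f x) r * s ≤ 4 * a * B := by
    unfold prox
    simp only []
    have m1 : max (f (r + c) - f r) 0 ≤ |f (r + c) - f r| :=
      max_le (le_abs_self _) (abs_nonneg _)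
    have m2 : max (f (-r + c) - f (-r)) 0 ≤ |f (-r + c) - f (-r)| :=
      max_le (le_abs_self _) (abs_nonneg _)
    have hs0 : (0:ℝ) ≤ s := by linarith
    have := add_le_add (mul_le_mul_of_nonneg_right m1 hs0) (mul_le_mul_of_nonneg_right m2 hs0)
    have hb1 : |f (r + c) - f r| * s ≤ 4*a*B := hgr
    have hb2 : |f (-r + c) - f (-r)| * s ≤ 4*a*B := hgnr
    calc (max (f (r + c) - f r) 0 + max (f (-r + c) - f (-r)) 0) / 2 * s
        = (max (f (r + c) - f r) 0 * s + max (f (-r + c) - f (-r)) 0 * s) / 2 := by ring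
      _ ≤ (|f (r + c) - f r| * s + |f (-r + c) - f (-r)| * s) / 2 := by linarith
      _ ≤ (4*a*B + 4*a*B) / 2 := by
            gcongr <;> assumption
      _ = 4*a*B := by ring
  -- final arithmetic
  have hfinal : 4 * a * B ≤ 16 * (a + 1) * (T' + |f 0| + 1) := by
    rw [hB]
    have h0 : (0:ℝ) ≤ |f 0| := abs_nonneg _
    nlinarith
  have hspos : (0:ℝ) < s := by linarith
  rw [div_mul_eq_mul_div, le_div_iff₀ hspos]
  calc prox (fun x => f (x + c) - f x) r * s ≤ 4 * a * B := hprox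
    _ ≤ 16 * (a + 1) * (T' + |f 0| + 1) := hfinal


lemma charT_lower {f : ℝ → ℝ} (hf : IsTropMero f) {b₀ : ℝ} (hb : omega f b₀ ≠ 0) {r : ℝ}
    (hr : |b₀| ≤ r) :
    min (f 0) 0 + |omega f b₀| / 2 * (r - |b₀|) ≤ charT f r := by
  have hr0 : 0 ≤ r := le_trans (abs_nonneg _) hr
  have hmin0 : min (f 0) 0 ≤ 0 := min_le_right _ _
  have hmax : max (r - |b₀|) 0 = r - |b₀| := max_eq_left (by linarith)
  rcases lt_or_gt_of_ne hb with hneg | hpos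
  · -- pole
    have h1 := countN_ge_single hf b₀ r
    rw [hmax, max_eq_left (by linarith : (0:ℝ) ≤ -omega f b₀)] at h1
    have h2 := prox_nonneg f r
    have habs : |omega f b₀| = -omega f b₀ := abs_of_neg hneg
    unfold charT
    rw [habs]
    linarith
  · -- root
    have h1 := countNroots_ge_single hf b₀ r
    rw [hmax, max_eq_left (by linarith : (0:ℝ) ≤ omega f b₀)] at h1
    have h2 := f_le_prox f r
    have h3 := jensen2 hf hr0
    have habs : |omega f b₀| = omega f b₀ := abs_of_pos hpos
    unfold charT
    rw [habs]
    have hmin : min (f 0) 0 ≤ f 0 := min_le_left _ _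
    linarith

/-- Chain lemma for the Borel-type exceptional set estimate. -/
lemma chainlem (T : ℝ → ℝ) (d R₂ o : ℝ) (hd : 1 ≤ d) (hR₂ : 1 ≤ R₂)
    (hmono : ∀ x y : ℝ, 0 ≤ x → x ≤ y → T x ≤ T y)
    (ho : 0 ≤ o) (hod : o ≤ d) (hit : ℕ → Prop)
    (hhit : ∀ j, hit j → ∃ rr : ℝ, R₂ ≤ rr ∧ 2 * T rr ≤ T (rr + d) ∧ 1 ≤ T rr ∧
      1 + o + 2*(j:ℝ)*d ≤ rr ∧ rr + d ≤ 1 + o + 2*((j:ℝ)+1)*d) :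
    ∀ J : ℕ, ((Finset.range J).filter hit).card = 0 ∨
      (2:ℝ) ^ (((Finset.range J).filter hit).card) ≤ T (1 + o + 2*(J:ℝ)*d) := by
  intro J
  induction J with
  | zero => left; simp
  | succ J ih =>
    have hw0 : (0:ℝ) ≤ 1 + o + 2*(J:ℝ)*d := by positivity
    have hwmono : 1 + o + 2*(J:ℝ)*d ≤ 1 + o + 2*((J:ℝ)+1)*d := by nlinarith
    have hsucc : ((J:ℕ)+1 : ℕ) = J + 1 := rfl
    have hcast : ((J+1 : ℕ) : ℝ) = (J:ℝ) + 1 := by push_cast; ring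
    by_cases hJ : hit J
    · have hcard : ((Finset.range (J+1)).filter hit).card
          = ((Finset.range J).filter hit).card + 1 := by
        rw [Finset.range_add_one, Finset.filter_insert, if_pos hJ,
          Finset.card_insert_of_notMem (by
            intro hmem
            exact absurd (Finset.mem_range.1 (Finset.mem_filter.1 hmem).1) (lt_irrefl J))]
      obtain ⟨rr, hrr1, hrr2, hrr3, hrr4, hrr5⟩ := hhit J hJ
      have hrr0 : (0:ℝ) ≤ rr := by linarith
      have hTr : T (rr + d) ≤ T (1 + o + 2*((J:ℝ)+1)*d) := hmono _ _ (by linarith) hrr5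
      right
      rw [hcard, hcast]
      rcases ih with h0 | hI
      · rw [h0]
        have : (2:ℝ)^(0+1) = 2 := by norm_num
        rw [this]
        have hTrr : (2:ℝ) ≤ 2 * T rr := by linarith
        linarith
      · have hTwJ : T (1 + o + 2*(J:ℝ)*d) ≤ T rr := hmono _ _ hw0 hrr4
        have : (2:ℝ) ^ (((Finset.range J).filter hit).card + 1)
            = 2 * (2:ℝ) ^ (((Finset.range J).filter hit).card) := by ring
        rw [this]
        have h2T : 2 * (2:ℝ) ^ (((Finset.range J).filter hit).card) ≤ 2 * T rr := by
          linarith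
        linarith
    · have hcard : ((Finset.range (J+1)).filter hit).card
          = ((Finset.range J).filter hit).card := by
        rw [Finset.range_add_one, Finset.filter_insert, if_neg hJ]
      rw [hcard]
      rcases ih with h0 | hI
      · left; exact h0
      · right
        rw [hcast]
        exact le_trans hI (hmono _ _ hw0 hwmono)


set_option maxHeartbeats 1000000 in
lemma borel_vol (T : ℝ → ℝ) (d R₂ : ℝ) (hd : 1 ≤ d) (hR₂ : 1 ≤ R₂)
    (hmono : ∀ x y : ℝ, 0 ≤ x → x ≤ y → T x ≤ T y) (hT1 : ∀ x, R₂ ≤ x → 1 ≤ T x)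
    {R : ℝ} (hRR₂ : R₂ ≤ R) (hRd : 3*d + 1 ≤ R) :
    (volume ({r : ℝ | R₂ + d ≤ r ∧ 2 * T r ≤ T (r + d)} ∩ Icc 1 R)).toReal
      ≤ 2*d*(Real.log (T (3*R)) / Real.log 2) := by
  classical
  have hd0 : (0:ℝ) < d := by linarith
  have hR1 : (1:ℝ) ≤ R := by linarith
  set E := {r : ℝ | R₂ + d ≤ r ∧ 2 * T r ≤ T (r + d)} with hE
  set X := E ∩ Icc 1 R with hX
  set M := Nat.ceil (R/d) with hM
  set W := (Finset.range M).filter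
    (fun k : ℕ => ∃ rr, rr ∈ X ∧ 1 + (k:ℝ)*d ≤ rr ∧ rr < 1 + ((k:ℝ)+1)*d) with hW
  set IV : ℕ → Set ℝ := fun k => Ico (1 + (k:ℝ)*d) (1 + ((k:ℝ)+1)*d) with hIV
  -- covering
  have hcover : X ⊆ ⋃ k : ℕ, ⋃ _ : k ∈ W, IV k := by
    intro r hr
    have hr1 : 1 ≤ r := hr.2.1
    have hrR : r ≤ R := hr.2.2
    set k := Nat.floor ((r-1)/d) with hk
    have hnn : (0:ℝ) ≤ (r-1)/d := div_nonneg (by linarith) (le_of_lt hd0)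
    have hk1 : (k:ℝ) ≤ (r-1)/d := Nat.floor_le hnn
    have hk2 : (r-1)/d < (k:ℝ) + 1 := Nat.lt_floor_add_one _
    have hmem1 : 1 + (k:ℝ)*d ≤ r := by
      have := (le_div_iff₀ hd0).1 hk1
      nlinarith [hk1, hd0]
    have hmem2 : r < 1 + ((k:ℝ)+1)*d := by
      have := (div_lt_iff₀ hd0).1 hk2
      nlinarith
    have hkM : k < M := by
      have h2 : (r-1)/d < R/d := by
        rw [div_lt_div_iff₀ hd0 hd0]
        nlinarith
      have h3 : R/d ≤ (M:ℝ) := Nat.le_ceil _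
      have : (k:ℝ) < (M:ℝ) := by linarith
      exact_mod_cast this
    have hkW : k ∈ W := by
      rw [hW]
      exact Finset.mem_filter.2 ⟨Finset.mem_range.2 hkM, ⟨r, hr, hmem1, hmem2⟩⟩
    exact mem_iUnion.2 ⟨k, mem_iUnion.2 ⟨hkW, hmem1, hmem2⟩⟩
  -- volume bound via the covering
  have hvol1 : (volume X).toReal ≤ (W.card : ℝ) * d := by
    have h1 : volume X ≤ ∑ k ∈ W, volume (IV k) :=
      le_trans (measure_mono hcover) (measure_biUnion_finset_le W IV)
    have h2 : ∀ k ∈ W, volume (IV k) = ENNReal.ofReal d := by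
      intro k _
      rw [hIV]
      simp only [Real.volume_Ico]
      congr 1
      ring
    rw [Finset.sum_congr rfl h2, Finset.sum_const, nsmul_eq_mul] at h1
    have h3 : (W.card : ENNReal) * ENNReal.ofReal d = ENNReal.ofReal ((W.card : ℝ) * d) := by
      rw [ENNReal.ofReal_mul (by positivity)]
      congr 1
      simp [ENNReal.ofReal_natCast]
    rw [h3] at h1
    exact ENNReal.toReal_le_of_le_ofReal (by positivity) h1
  -- parity split
  set We := W.filter (fun k => k % 2 = 0) with hWe
  set Wo := W.filter (fun k => ¬ k % 2 = 0) with hWo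
  have hWsplit : W.card = We.card + Wo.card :=
    (Finset.card_filter_add_card_filter_not (fun k => k % 2 = 0)).symm
  have hlog2 : (0:ℝ) < Real.log 2 := Real.log_pos (by norm_num)
  have hT3R : 1 ≤ T (3*R) := hT1 _ (by linarith)
  have hlogT : 0 ≤ Real.log (T (3*R)) := Real.log_nonneg hT3R
  have hlogb : ∀ cnt : ℕ, (2:ℝ)^cnt ≤ T (3*R) → (cnt:ℝ) ≤ Real.log (T (3*R)) / Real.log 2 := by
    intro cnt hcnt
    have h1 : Real.log ((2:ℝ)^cnt) ≤ Real.log (T (3*R)) :=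
      Real.log_le_log (by positivity) hcnt
    rw [Real.log_pow] at h1
    rw [le_div_iff₀ hlog2]
    exact h1
  -- window argument bound
  have hMle : 1 + 2*(M:ℝ)*d + d ≤ 3*R := by
    have h1 : (M:ℝ) < R/d + 1 := Nat.ceil_lt_add_one (by positivity)
    have h2 : (M:ℝ)*d < R + d := by
      have := mul_lt_mul_of_pos_right h1 hd0
      rw [add_mul, div_mul_cancel₀ _ (ne_of_gt hd0)] at this
      linarith
    nlinarith
  -- generic per-parity counting
  have hpar : ∀ o : ℝ, 0 ≤ o → o ≤ d →
      ∀ V : Finset ℕ, (∀ k ∈ V, ∃ rr, rr ∈ X ∧ 1 + (k:ℝ)*d ≤ rr ∧ rr < 1 + ((k:ℝ)+1)*d) →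
      (∀ k ∈ V, k < M) →
      (∀ k ∈ V, ((k:ℝ))*d = o + 2*((k/2 : ℕ):ℝ)*d) →
      (∀ k₁ ∈ V, ∀ k₂ ∈ V, k₁/2 = k₂/2 → k₁ = k₂) →
      (V.card : ℝ) ≤ Real.log (T (3*R)) / Real.log 2 := by
    intro o ho hod V hV hVM hVo hVinj
    set hit : ℕ → Prop := fun j => ∃ rr : ℝ, R₂ ≤ rr ∧ 2 * T rr ≤ T (rr + d) ∧ 1 ≤ T rr ∧
      1 + o + 2*(j:ℝ)*d ≤ rr ∧ rr + d ≤ 1 + o + 2*((j:ℝ)+1)*d with hhitdef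
    have hcardle : V.card ≤ ((Finset.range M).filter hit).card := by
      refine Finset.card_le_card_of_injOn (fun k => k / 2) ?_ ?_
      · intro k hk
        obtain ⟨rr, hrrX, hrr1, hrr2⟩ := hV k hk
        have hrrE : rr ∈ E := hrrX.1
        have hrrE1 : R₂ + d ≤ rr := hrrE.1
        refine Finset.mem_filter.2 ⟨Finset.mem_range.2 (lt_of_le_of_lt (Nat.div_le_self k 2) (hVM k hk)), ?_⟩
        refine ⟨rr, by linarith, hrrE.2, hT1 rr (by linarith), ?_, ?_⟩
        · have := hVo k hk
          linarith [hrr1, this]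
        · have := hVo k hk
          have h5 : rr < 1 + (k:ℝ)*d + d := by linarith [hrr2]
          have : rr + d < 1 + o + 2*((k/2 : ℕ):ℝ)*d + 2*d := by linarith
          linarith [this]
      · intro k₁ hk₁ k₂ hk₂ h
        exact hVinj k₁ (Finset.mem_coe.1 hk₁) k₂ (Finset.mem_coe.1 hk₂) h
    have hchain := chainlem T d R₂ o hd hR₂ hmono ho hod hit (fun j hj => hj) M
    have hcnt : (((Finset.range M).filter hit).card : ℝ) ≤ Real.log (T (3*R)) / Real.log 2 := by
      rcases hchain with h0 | h1
      · rw [h0]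
        simpa using div_nonneg hlogT (le_of_lt hlog2)
      · refine hlogb _ (le_trans h1 (hmono _ _ (by positivity) ?_))
        linarith [hMle, hod]
    calc (V.card : ℝ) ≤ (((Finset.range M).filter hit).card : ℝ) := by exact_mod_cast hcardle
      _ ≤ Real.log (T (3*R)) / Real.log 2 := hcnt
  -- apply to evens and odds
  have hVe : (We.card : ℝ) ≤ Real.log (T (3*R)) / Real.log 2 := by
    refine hpar 0 (le_refl 0) (by linarith) We ?_ ?_ ?_ ?_
    · intro k hk
      exact (Finset.mem_filter.1 (Finset.mem_filter.1 hk).1).2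
    · intro k hk
      exact Finset.mem_range.1 (Finset.mem_filter.1 (Finset.mem_filter.1 hk).1).1
    · intro k hk
      have hke : k % 2 = 0 := (Finset.mem_filter.1 hk).2
      have h2k : 2 * (k/2) = k := by omega
      have hc : ((k:ℝ)) = 2*((k/2 : ℕ):ℝ) := by exact_mod_cast h2k.symm
      rw [zero_add]
      rw [hc]
    · intro k₁ hk₁ k₂ hk₂ h
      have h1 : k₁ % 2 = 0 := (Finset.mem_filter.1 hk₁).2
      have h2 : k₂ % 2 = 0 := (Finset.mem_filter.1 hk₂).2
      omega
  have hVoo : (Wo.card : ℝ) ≤ Real.log (T (3*R)) / Real.log 2 := by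
    refine hpar d (by linarith) (le_refl d) Wo ?_ ?_ ?_ ?_
    · intro k hk
      exact (Finset.mem_filter.1 (Finset.mem_filter.1 hk).1).2
    · intro k hk
      exact Finset.mem_range.1 (Finset.mem_filter.1 (Finset.mem_filter.1 hk).1).1
    · intro k hk
      have hko : ¬ k % 2 = 0 := (Finset.mem_filter.1 hk).2
      have h2k : 2 * (k/2) + 1 = k := by omega
      have hc : ((k:ℝ)) = 2*((k/2 : ℕ):ℝ) + 1 := by exact_mod_cast h2k.symm
      rw [hc]
      ring
    · intro k₁ hk₁ k₂ hk₂ h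
      have h1 : ¬ k₁ % 2 = 0 := (Finset.mem_filter.1 hk₁).2
      have h2 : ¬ k₂ % 2 = 0 := (Finset.mem_filter.1 hk₂).2
      omega
  -- combine
  calc (volume X).toReal ≤ (W.card : ℝ) * d := hvol1
    _ = ((We.card : ℝ) + (Wo.card : ℝ)) * d := by rw [hWsplit]; push_cast; ring
    _ ≤ (Real.log (T (3*R)) / Real.log 2 + Real.log (T (3*R)) / Real.log 2) * d := by
        have := add_le_add hVe hVoo
        nlinarith
    _ = 2*d*(Real.log (T (3*R)) / Real.log 2) := by ring


lemma geom_tail (N : ℕ) : ∀ M : ℕ,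
    ∑ n ∈ Finset.range M, (if n < N then 0 else ((1:ℝ)/2)^(n+1)) ≤ (1/2)^N := by
  have key : ∀ M : ℕ, ∑ n ∈ Finset.range M, (if n < N then 0 else ((1:ℝ)/2)^(n+1))
      ≤ (1/2)^N - (1/2)^(max M N) := by
    intro M
    induction M with
    | zero => simp
    | succ M ih =>
      rw [Finset.sum_range_succ]
      by_cases hMN : M < N
      · rw [if_pos hMN]
        have h1 : max M N = N := max_eq_right (le_of_lt hMN)
        have h2 : max (M+1) N = N := max_eq_right hMN
        rw [h2]; rw [h1] at ih; linarith
      · rw [if_neg hMN]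
        push_neg at hMN
        have h1 : max M N = M := max_eq_left hMN
        have h2 : max (M+1) N = M+1 := max_eq_left (by omega)
        rw [h2]; rw [h1] at ih
        have : ((1:ℝ)/2)^(M+1) = (1/2)^M - (1/2)^(M+1) := by
          rw [pow_succ]; ring
        linarith
  intro M
  have := key M
  have hpos : (0:ℝ) ≤ (1/2)^(max M N) := by positivity
  linarith

lemma zud_empty : ZeroUpperDensity (∅ : Set ℝ) := by
  constructor
  · intro ε hε
    filter_upwards with r
    simp [hε]
  · intro ε hε
    refine Filter.Eventually.frequently ?_
    filter_upwards with r
    simp; linarith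

end Stmt3Aux

open Stmt3Aux

set_option maxHeartbeats 1000000 in
/-- tropical logarithmic derivative lemma. -/
theorem stmt3 (c : ℝ) (hc : c ≠ 0) (f : ℝ → ℝ) (hf : IsTropMero f)
    (hgrow : LimsupZero fun r => Real.log (charT f r) / r) :
    ∃ E : Set ℝ, ZeroUpperDensity E ∧
      Filter.Tendsto (fun r => prox (fun x => f (x + c) - f x) r / charT f r)
        (Filter.atTop ⊓ Filter.principal Eᶜ) (nhds 0) := by
  classical
  by_cases hjump : ∃ b, omega f b ≠ 0
  · obtain ⟨b₀, hb₀⟩ := hjump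
    have hTmono : ∀ x y : ℝ, 0 ≤ x → x ≤ y → charT f x ≤ charT f y :=
      fun x y hx hxy => charT_mono hf hx hxy
    have hκ : (0:ℝ) < |omega f b₀| / 2 := by
      have := abs_pos.2 hb₀
      linarith
    set κ := |omega f b₀| / 2 with hκdef
    set A := |f 0| + 1 with hAdef
    have hA1 : (1:ℝ) ≤ A := by
      have := abs_nonneg (f 0)
      rw [hAdef]; linarith
    set R₂ := max 1 (|b₀| + (A + |f 0|)/κ) with hR₂def
    have hR₂1 : (1:ℝ) ≤ R₂ := le_max_left _ _
    have hTA : ∀ x, R₂ ≤ x → A ≤ charT f x := by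
      intro x hx
      have hx2 : |b₀| + (A + |f 0|)/κ ≤ x := le_trans (le_max_right _ _) hx
      have hbx : |b₀| ≤ x := by
        have h1 : (0:ℝ) ≤ (A + |f 0|)/κ := by positivity
        linarith
      have hlow := charT_lower hf hb₀ hbx
      rw [← hκdef] at hlow
      have hmin : -|f 0| ≤ min (f 0) 0 := by
        rcases le_total (f 0) 0 with h | h
        · rw [min_eq_left h]; exact neg_abs_le _
        · rw [min_eq_right h]; simp [abs_nonneg]
      have hκx : A + |f 0| ≤ κ * (x - |b₀|) := by
        have h2 : (A + |f 0|)/κ ≤ x - |b₀| := by linarith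
        have h3 := mul_le_mul_of_nonneg_left h2 (le_of_lt hκ)
        rw [mul_div_cancel₀ _ (ne_of_gt hκ)] at h3
        linarith
      linarith
    have hT1 : ∀ x, R₂ ≤ x → 1 ≤ charT f x := fun x hx => le_trans hA1 (hTA x hx)
    have hgrowth : ∀ ε : ℝ, 0 < ε → ∀ᶠ R : ℝ in Filter.atTop,
        Real.log (charT f (3*R)) ≤ ε * R := by
      intro ε hε
      have h3 : Filter.Tendsto (fun R : ℝ => 3*R) Filter.atTop Filter.atTop :=
        Filter.Tendsto.const_mul_atTop (by norm_num) Filter.tendsto_id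
      have h1 := h3.eventually (hgrow.1 (ε/3) (by linarith))
      filter_upwards [h1, Filter.eventually_gt_atTop 0] with R hR hR0
      have h3R : (0:ℝ) < 3*R := by linarith
      have h2 := (div_lt_iff₀ h3R).1 hR
      calc Real.log (charT f (3*R)) ≤ ε/3*(3*R) := le_of_lt h2
        _ = ε * R := by ring
    set K := 16*(|c|+1) with hKdef
    have hK16 : (16:ℝ) ≤ K := by
      have := abs_nonneg c
      rw [hKdef]; nlinarith
    set sn : ℕ → ℝ := fun n => 6*K*((n:ℝ)+1) with hsn
    set dn : ℕ → ℝ := fun n => |c| + sn n with hdn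
    have hsn1 : ∀ n : ℕ, 1 ≤ sn n := by
      intro n
      have hn : (0:ℝ) ≤ (n:ℝ) := Nat.cast_nonneg n
      rw [hsn]; simp only []; nlinarith
    have hdn1 : ∀ n : ℕ, 1 ≤ dn n := by
      intro n
      have := hsn1 n
      have := abs_nonneg c
      rw [hdn]; simp only []; linarith
    set Eb : ℕ → Set ℝ := fun n => {r : ℝ | R₂ + dn n ≤ r ∧ 2 * charT f r ≤ charT f (r + dn n)}
      with hEb
    have hEbsmall : ∀ n : ℕ, ∀ η : ℝ, 0 < η →
        ∀ᶠ R : ℝ in Filter.atTop, (volume (Eb n ∩ Icc 1 R)).toReal ≤ η * R := by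
      intro n η hη
      have hlog2 : (0:ℝ) < Real.log 2 := Real.log_pos (by norm_num)
      have hdpos : (0:ℝ) < dn n := by linarith [hdn1 n]
      set ε' := η * Real.log 2 / (2 * dn n) with hε'
      have hε'pos : 0 < ε' := div_pos (mul_pos hη hlog2) (by linarith)
      filter_upwards [hgrowth ε' hε'pos, Filter.eventually_ge_atTop (max R₂ (3*dn n + 1))]
        with R hR1 hR2
      have hRR₂ : R₂ ≤ R := le_trans (le_max_left _ _) hR2
      have hRd : 3*dn n + 1 ≤ R := le_trans (le_max_right _ _) hR2
      have hbv := borel_vol (charT f) (dn n) R₂ (hdn1 n) hR₂1 hTmono hT1 hRR₂ hRd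
      calc (volume (Eb n ∩ Icc 1 R)).toReal
          ≤ 2*dn n*(Real.log (charT f (3*R)) / Real.log 2) := hbv
        _ ≤ 2*dn n*((ε' * R) / Real.log 2) := by
            refine mul_le_mul_of_nonneg_left ?_ (by linarith)
            gcongr
        _ = η * R := by
            rw [hε']
            field_simp
    set Bset : ℕ → Set ℝ := fun n => {r : ℝ | 1 ≤ r ∧
      ¬ (prox (fun x => f (x + c) - f x) r / charT f r < 1/((n:ℝ)+1))} with hBset
    have hBsub : ∀ n : ℕ, ∀ r : ℝ, max (R₂ + dn n) (sn n) ≤ r → r ∉ Eb n →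
        prox (fun x => f (x + c) - f x) r / charT f r < 1/((n:ℝ)+1) := by
      intro n r hr hrE
      have hrs : sn n ≤ r := le_trans (le_max_right _ _) hr
      have hrR : R₂ + dn n ≤ r := le_trans (le_max_left _ _) hr
      have hr1 : (1:ℝ) ≤ r := by linarith [hdn1 n]
      have hest := main_est hf hc hr1 (hsn1 n) hrs
      have hrd : charT f (r + dn n) < 2 * charT f r := by
        by_contra hcon
        push_neg at hcon
        exact hrE ⟨hrR, hcon⟩
      have hTA' : A ≤ charT f r := hTA r (by linarith [hdn1 n])
      have hTr1 : (1:ℝ) ≤ charT f r := le_trans hA1 hTA'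
      have harg : r + |c| + sn n = r + dn n := by rw [hdn]; ring
      rw [harg] at hest
      have h3 : charT f (r + dn n) + |f 0| + 1 ≤ 3 * charT f r := by
        rw [hAdef] at hTA'
        linarith
      have hsnpos : (0:ℝ) < sn n := by linarith [hsn1 n]
      have hKsn : (0:ℝ) < K / sn n := div_pos (by linarith) hsnpos
      have h4 : prox (fun x => f (x + c) - f x) r ≤ (K / sn n) * (3 * charT f r) := by
        calc prox (fun x => f (x + c) - f x) r
            ≤ K / sn n * (charT f (r + dn n) + |f 0| + 1) := hest
          _ ≤ (K / sn n) * (3 * charT f r) := by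
              refine mul_le_mul_of_nonneg_left h3 (le_of_lt hKsn)
      have hn1 : (0:ℝ) < (n:ℝ)+1 := by positivity
      have h5 : (K / sn n) * (3 * charT f r) = charT f r / (2*((n:ℝ)+1)) := by
        rw [hsn]
        have hK0 : K ≠ 0 := by linarith
        field_simp
        ring
      have hTrpos : (0:ℝ) < charT f r := by linarith
      rw [div_lt_iff₀ hTrpos]
      have hgap : 1/((n:ℝ)+1)*charT f r - charT f r/(2*((n:ℝ)+1))
          = charT f r/(2*((n:ℝ)+1)) := by
        field_simp
        ring
      have hpos2 : (0:ℝ) < charT f r/(2*((n:ℝ)+1)) := by positivity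
      calc prox (fun x => f (x + c) - f x) r ≤ charT f r / (2*((n:ℝ)+1)) := by
            rw [← h5]; exact h4
        _ < 1/((n:ℝ)+1) * charT f r := by linarith
    have hBsmall : ∀ n : ℕ, ∀ η : ℝ, 0 < η →
        ∀ᶠ R : ℝ in Filter.atTop, (volume (Bset n ∩ Icc 1 R)).toReal ≤ η * R := by
      intro n η hη
      set ρn := max (R₂ + dn n) (sn n) with hρn
      have hρn1 : (1:ℝ) ≤ ρn := le_trans (by linarith [hdn1 n]) (le_max_left _ _)
      have hsubset : ∀ R : ℝ, Bset n ∩ Icc 1 R ⊆ (Icc 1 ρn) ∪ (Eb n ∩ Icc 1 R) := by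
        intro R r hrmem
        obtain ⟨hrB, hrI⟩ := hrmem
        by_cases hcase : r < ρn
        · left; exact ⟨hrI.1, le_of_lt hcase⟩
        · right
          push_neg at hcase
          refine ⟨?_, hrI⟩
          by_contra hnE
          exact hrB.2 (hBsub n r hcase hnE)
      filter_upwards [hEbsmall n (η/2) (by linarith),
        Filter.eventually_ge_atTop (max 1 (2*ρn/η))] with R hR1 hR2
      have hR1' : (1:ℝ) ≤ R := le_trans (le_max_left _ _) hR2
      have hRρ : 2*ρn/η ≤ R := le_trans (le_max_right _ _) hR2
      have hvol : volume (Bset n ∩ Icc 1 R) ≤ volume (Icc (1:ℝ) ρn) + volume (Eb n ∩ Icc 1 R) :=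
        le_trans (measure_mono (hsubset R)) (measure_union_le _ _)
      have hfin1 : volume (Icc (1:ℝ) ρn) ≠ ⊤ := by
        rw [Real.volume_Icc]; exact ENNReal.ofReal_ne_top
      have hfin2 : volume (Eb n ∩ Icc 1 R) ≠ ⊤ := by
        refine ne_top_of_le_ne_top ?_ (measure_mono inter_subset_right)
        rw [Real.volume_Icc]; exact ENNReal.ofReal_ne_top
      have htr : (volume (Bset n ∩ Icc 1 R)).toReal
          ≤ (ρn - 1) + (volume (Eb n ∩ Icc 1 R)).toReal := by
        have h1 : (volume (Bset n ∩ Icc 1 R)).toReal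
            ≤ (volume (Icc (1:ℝ) ρn) + volume (Eb n ∩ Icc 1 R)).toReal := by
          refine ENNReal.toReal_mono ?_ hvol
          exact ENNReal.add_ne_top.2 ⟨hfin1, hfin2⟩
        rw [ENNReal.toReal_add hfin1 hfin2, Real.volume_Icc,
          ENNReal.toReal_ofReal (by linarith)] at h1
        exact h1
      have hρR : ρn ≤ η/2 * R := by
        have hη0 : η ≠ 0 := ne_of_gt hη
        have he : η/2 * (2*ρn/η) = ρn := by field_simp
        have h2 := mul_le_mul_of_nonneg_left hRρ (show (0:ℝ) ≤ η/2 by linarith)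
        rw [he] at h2
        exact h2
      calc (volume (Bset n ∩ Icc 1 R)).toReal
          ≤ (ρn - 1) + (volume (Eb n ∩ Icc 1 R)).toReal := htr
        _ ≤ η/2 * R + η/2 * R := by linarith [hR1]
        _ = η * R := by ring
    -- choose thresholds
    have hchoice : ∀ n : ℕ, ∃ t : ℝ, (n:ℝ)+1 ≤ t ∧
        ∀ R, t ≤ R → (volume (Bset n ∩ Icc 1 R)).toReal ≤ (1/2)^(n+1) * R := by
      intro n
      have := hBsmall n ((1/2)^(n+1)) (by positivity)
      obtain ⟨t₀, ht₀⟩ := Filter.eventually_atTop.1 this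
      exact ⟨max t₀ ((n:ℝ)+1), le_max_right _ _,
        fun R hR => ht₀ R (le_trans (le_max_left _ _) hR)⟩
    set cseq : ℕ → ℝ := fun n => (hchoice n).choose with hcseq
    have hcseq1 : ∀ n : ℕ, (n:ℝ)+1 ≤ cseq n := fun n => (hchoice n).choose_spec.1
    have hcseq2 : ∀ n : ℕ, ∀ R, cseq n ≤ R →
        (volume (Bset n ∩ Icc 1 R)).toReal ≤ (1/2)^(n+1) * R :=
      fun n => (hchoice n).choose_spec.2
    refine ⟨⋃ n : ℕ, (Bset n ∩ Ici (cseq n)), ?_, ?_⟩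
    · -- zero upper density
      constructor
      · intro ε hε
        obtain ⟨N, hN⟩ := exists_pow_lt_of_lt_one (show (0:ℝ) < ε/4 by linarith)
          (show (1:ℝ)/2 < 1 by norm_num)
        have hhead : ∀ᶠ R : ℝ in Filter.atTop, ∀ n ∈ Finset.range N,
            (volume (Bset n ∩ Icc 1 R)).toReal ≤ ε/(4*((N:ℝ)+1)) * R := by
          rw [Filter.eventually_all_finset]
          intro n _
          exact hBsmall n (ε/(4*((N:ℝ)+1))) (by positivity)
        filter_upwards [hhead, Filter.eventually_ge_atTop 1] with R hR1 hR2
        set M := Nat.ceil R with hM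
        have hcov : (⋃ n : ℕ, (Bset n ∩ Ici (cseq n))) ∩ Icc 1 R
            ⊆ ⋃ n ∈ Finset.range M, (Bset n ∩ Ici (cseq n) ∩ Icc 1 R) := by
          rintro r ⟨hrU, hrI⟩
          obtain ⟨n, hn⟩ := mem_iUnion.1 hrU
          have hnM : n < M := by
            rw [hM, Nat.lt_ceil]
            have := hcseq1 n
            have := hn.2
            have := hrI.2
            simp only [mem_Ici] at *
            linarith
          exact mem_iUnion₂.2 ⟨n, Finset.mem_range.2 hnM, ⟨hn, hrI⟩⟩
        have hsum : volume ((⋃ n : ℕ, (Bset n ∩ Ici (cseq n))) ∩ Icc 1 R)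
            ≤ ∑ n ∈ Finset.range M, volume (Bset n ∩ Ici (cseq n) ∩ Icc 1 R) :=
          le_trans (measure_mono hcov) (measure_biUnion_finset_le _ _)
        set bnd : ℕ → ℝ := fun n => if n < N then ε/(4*((N:ℝ)+1)) * R else (1/2)^(n+1) * R
          with hbnd
        have hbnd0 : ∀ n, 0 ≤ bnd n := by
          intro n
          by_cases h : n < N
          · simp only [hbnd, if_pos h]
            positivity
          · simp only [hbnd, if_neg h]
            positivity
        have hterm : ∀ n ∈ Finset.range M,
            volume (Bset n ∩ Ici (cseq n) ∩ Icc 1 R) ≤ ENNReal.ofReal (bnd n) := by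
          intro n _
          have hfin : volume (Bset n ∩ Icc 1 R) ≠ ⊤ := by
            refine ne_top_of_le_ne_top ?_ (measure_mono inter_subset_right)
            rw [Real.volume_Icc]; exact ENNReal.ofReal_ne_top
          by_cases hnN : n < N
          · have h1 : volume (Bset n ∩ Ici (cseq n) ∩ Icc 1 R)
                ≤ volume (Bset n ∩ Icc 1 R) := by
              refine measure_mono ?_
              intro r hr
              exact ⟨hr.1.1, hr.2⟩
            have h2 := hR1 n (Finset.mem_range.2 hnN)
            calc volume (Bset n ∩ Ici (cseq n) ∩ Icc 1 R) ≤ volume (Bset n ∩ Icc 1 R) := h1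
              _ = ENNReal.ofReal ((volume (Bset n ∩ Icc 1 R)).toReal) :=
                  (ENNReal.ofReal_toReal hfin).symm
              _ ≤ ENNReal.ofReal (bnd n) := by
                  refine ENNReal.ofReal_le_ofReal ?_
                  simp only [hbnd, if_pos hnN]
                  exact h2
          · by_cases hcR : cseq n ≤ R
            · have h1 : volume (Bset n ∩ Ici (cseq n) ∩ Icc 1 R)
                  ≤ volume (Bset n ∩ Icc 1 R) := by
                refine measure_mono ?_
                intro r hr
                exact ⟨hr.1.1, hr.2⟩
              have h2 := hcseq2 n R hcR
              calc volume (Bset n ∩ Ici (cseq n) ∩ Icc 1 R) ≤ volume (Bset n ∩ Icc 1 R) := h1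
                _ = ENNReal.ofReal ((volume (Bset n ∩ Icc 1 R)).toReal) :=
                    (ENNReal.ofReal_toReal hfin).symm
                _ ≤ ENNReal.ofReal (bnd n) := by
                    refine ENNReal.ofReal_le_ofReal ?_
                    simp only [hbnd, if_neg hnN]
                    exact h2
            · have hempty : Bset n ∩ Ici (cseq n) ∩ Icc 1 R = ∅ := by
                rw [Set.eq_empty_iff_forall_notMem]
                intro r hr
                have h1 : cseq n ≤ r := hr.1.2
                have h2 : r ≤ R := hr.2.2
                exact hcR (le_trans h1 h2)
              rw [hempty]
              simp
        have htotal : volume ((⋃ n : ℕ, (Bset n ∩ Ici (cseq n))) ∩ Icc 1 R)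
            ≤ ENNReal.ofReal (∑ n ∈ Finset.range M, bnd n) := by
          calc volume ((⋃ n : ℕ, (Bset n ∩ Ici (cseq n))) ∩ Icc 1 R)
              ≤ ∑ n ∈ Finset.range M, volume (Bset n ∩ Ici (cseq n) ∩ Icc 1 R) := hsum
            _ ≤ ∑ n ∈ Finset.range M, ENNReal.ofReal (bnd n) := Finset.sum_le_sum hterm
            _ = ENNReal.ofReal (∑ n ∈ Finset.range M, bnd n) :=
                (ENNReal.ofReal_sum_of_nonneg (fun n _ => hbnd0 n)).symm
        have hsumbnd : ∑ n ∈ Finset.range M, bnd n ≤ ε/2 * R := by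
          have hsplit : ∀ n, bnd n = (if n < N then ε/(4*((N:ℝ)+1)) * R else 0)
              + (if n < N then 0 else (1/2)^(n+1)) * R := by
            intro n
            by_cases h : n < N
            · simp only [hbnd, if_pos h]; ring
            · simp only [hbnd, if_neg h]; ring
          rw [Finset.sum_congr rfl (fun n _ => hsplit n), Finset.sum_add_distrib]
          have hh : ∑ n ∈ Finset.range M, (if n < N then ε/(4*((N:ℝ)+1)) * R else 0)
              ≤ ε/4 * R := by
            rw [← Finset.sum_filter, Finset.sum_const, nsmul_eq_mul]
            have hcard : ((Finset.range M).filter (fun n => n < N)).card ≤ N := by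
              refine le_trans (Finset.card_le_card ?_) (le_of_eq (Finset.card_range N))
              intro n hn
              exact Finset.mem_range.2 (Finset.mem_filter.1 hn).2
            have hc1 : (((Finset.range M).filter (fun n => n < N)).card : ℝ) ≤ (N:ℝ)+1 := by
              have : (((Finset.range M).filter (fun n => n < N)).card : ℝ) ≤ (N:ℝ) := by
                exact_mod_cast hcard
              linarith
            have hN1 : (0:ℝ) < (N:ℝ)+1 := by positivity
            have hRpos : (0:ℝ) ≤ R := by linarith
            have hq0 : (0:ℝ) ≤ ε/(4*((N:ℝ)+1)) * R := by positivity
            have hkey : ((N:ℝ)+1) * (ε/(4*((N:ℝ)+1)) * R) = ε/4*R := by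
              field_simp
            calc (((Finset.range M).filter (fun n => n < N)).card : ℝ)
                  * (ε/(4*((N:ℝ)+1)) * R)
                ≤ ((N:ℝ)+1) * (ε/(4*((N:ℝ)+1)) * R) := mul_le_mul_of_nonneg_right hc1 hq0
              _ = ε/4 * R := hkey
          have ht : ∑ n ∈ Finset.range M, (if n < N then 0 else ((1:ℝ)/2)^(n+1)) * R
              ≤ ε/4 * R := by
            rw [← Finset.sum_mul]
            have := geom_tail N M
            have hRpos : (0:ℝ) ≤ R := by linarith
            calc (∑ n ∈ Finset.range M, (if n < N then 0 else ((1:ℝ)/2)^(n+1))) * R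
                ≤ (1/2)^N * R := mul_le_mul_of_nonneg_right this hRpos
              _ ≤ ε/4 * R := mul_le_mul_of_nonneg_right (le_of_lt hN) hRpos
          linarith
        have hfinal : (volume ((⋃ n : ℕ, (Bset n ∩ Ici (cseq n))) ∩ Icc 1 R)).toReal
            ≤ ε/2 * R := by
          refine ENNReal.toReal_le_of_le_ofReal (by positivity) ?_
          exact le_trans htotal (ENNReal.ofReal_le_ofReal hsumbnd)
        have hRpos : (0:ℝ) < R := by linarith
        rw [div_lt_iff₀ hRpos]
        calc (volume ((⋃ n : ℕ, (Bset n ∩ Ici (cseq n))) ∩ Icc 1 R)).toReal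
            ≤ ε/2 * R := hfinal
          _ < ε * R := by nlinarith
      · intro ε hε
        refine Filter.Eventually.frequently ?_
        filter_upwards [Filter.eventually_gt_atTop 0] with R hR
        have h1 : (0:ℝ) ≤ (volume ((⋃ n : ℕ, (Bset n ∩ Ici (cseq n))) ∩ Icc 1 R)).toReal / R :=
          div_nonneg ENNReal.toReal_nonneg (le_of_lt hR)
        linarith
    · -- the tendsto statement
      rw [Metric.tendsto_nhds]
      intro ε hε
      obtain ⟨N, hN⟩ := exists_nat_one_div_lt hε
      rw [Filter.eventually_inf_principal]
      filter_upwards [Filter.eventually_ge_atTop (max (cseq N) R₂)] with r hr hrE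
      have hrc : cseq N ≤ r := le_trans (le_max_left _ _) hr
      have hrR₂ : R₂ ≤ r := le_trans (le_max_right _ _) hr
      have hr1 : (1:ℝ) ≤ r := le_trans hR₂1 hrR₂
      have hrB : r ∉ Bset N := by
        intro hmem
        exact hrE (mem_iUnion.2 ⟨N, hmem, hrc⟩)
      have hq : prox (fun x => f (x + c) - f x) r / charT f r < 1/((N:ℝ)+1) := by
        by_contra hcon
        exact hrB ⟨hr1, hcon⟩
      have hq0 : 0 ≤ prox (fun x => f (x + c) - f x) r / charT f r :=
        div_nonneg (prox_nonneg _ _) (charT_nonneg hf r)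
      rw [Real.dist_eq, sub_zero, abs_of_nonneg hq0]
      calc prox (fun x => f (x + c) - f x) r / charT f r < 1/((N:ℝ)+1) := hq
        _ < ε := hN

  · -- affine case
    push_neg at hjump
    have haff : ∀ x : ℝ, f x = f 0 + dR f 0 * x := by
      intro x
      rcases le_total 0 x with hx | hx
      · have h := affine_of_no_jump hf hx (fun b _ => hjump b) x ⟨hx, le_refl x⟩
        simpa using h
      · obtain ⟨hval, hslope⟩ := I1 hf hx
        have hz1 : ∑ b ∈ JIoc hf x 0, omega f b * (0 - b) = 0 :=
          Finset.sum_eq_zero (fun b _ => by rw [hjump b]; ring)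
        have hz2 : ∑ b ∈ JIoc hf x 0, omega f b = 0 :=
          Finset.sum_eq_zero (fun b _ => hjump b)
        rw [hz1] at hval
        rw [hz2] at hslope
        rw [hslope]
        rw [hval]; ring
    set α := dR f 0 with hα
    have hgconst : ∀ x : ℝ, f (x + c) - f x = α * c := by
      intro x
      rw [haff (x+c), haff x]; ring
    have hproxg : ∀ r : ℝ, prox (fun x => f (x + c) - f x) r = max (α * c) 0 := by
      intro r
      unfold prox
      simp only []
      rw [hgconst r, hgconst (-r)]
      ring
    by_cases hα0 : α = 0
    · refine ⟨∅, zud_empty, ?_⟩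
      have : (fun r => prox (fun x => f (x + c) - f x) r / charT f r) = fun _ => 0 := by
        funext r
        rw [hproxg r, hα0]
        simp
      rw [this]
      exact tendsto_const_nhds
    · refine ⟨∅, zud_empty, ?_⟩
      have hTlin : ∀ r : ℝ, (|α| * r - |f 0|) / 2 ≤ charT f r := by
        intro r
        have hN := countN_nonneg hf r
        have hlow : (|α| * r - |f 0|) / 2 ≤ prox f r := by
          unfold prox
          rw [haff r, haff (-r)]
          have hβ : -|f 0| ≤ f 0 := neg_abs_le _
          have hβ' : f 0 ≤ |f 0| := le_abs_self _
          rcases le_total 0 α with hs | hs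
          · have h1 : f 0 + α * r ≤ max (f 0 + α * r) 0 := le_max_left _ _
            have h2 : (0:ℝ) ≤ max (f 0 + α * (-r)) 0 := le_max_right _ _
            rw [abs_of_nonneg hs]
            linarith
          · have h1 : f 0 + α * (-r) ≤ max (f 0 + α * (-r)) 0 := le_max_left _ _
            have h2 : (0:ℝ) ≤ max (f 0 + α * r) 0 := le_max_right _ _
            rw [abs_of_nonpos hs]
            linarith
        unfold charT
        linarith
      have hTtop : Filter.Tendsto (charT f) Filter.atTop Filter.atTop := by
        refine Filter.tendsto_atTop_mono hTlin ?_
        have h1 : Filter.Tendsto (fun r : ℝ => |α| * r) Filter.atTop Filter.atTop :=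
          Filter.Tendsto.const_mul_atTop (abs_pos.2 hα0) Filter.tendsto_id
        have h2 : Filter.Tendsto (fun r : ℝ => |α| * r - |f 0|) Filter.atTop Filter.atTop :=
          Filter.tendsto_atTop_add_const_right _ _ h1
        exact Filter.Tendsto.atTop_div_const (by norm_num) h2
      have heq : (fun r => prox (fun x => f (x + c) - f x) r / charT f r)
          = fun r => (max (α * c) 0) / charT f r := by
        funext r; rw [hproxg r]
      rw [heq]
      exact Filter.Tendsto.div_atTop tendsto_const_nhds
        (hTtop.mono_left inf_le_left)
end

section
/- Let f : ℝ → TP^n be a tropical holomorphic curve and let V_P be a tropical hypersurface of degree d such that f(ℝ) ⊄ V_P. Then m_f(r, V_P) + N(r, 1₀⊘(P∘f)) = d·T_f(r) + O(1) as r → ∞. -/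
open Filter MeasureTheory Topology
open scoped Classical

/-!
`P ∘ f` is a maximum of finitely many functions `c_I + ∑ i_k f_k`, so it is again convex and
piecewise linear, i.e. tropical entire. For a tropical meromorphic `g` and `r ≥ 0`, subtracting
the kinks `ω_g(b)/2 · |t - b|` at the finitely many break points `b ∈ [-r, r]` leaves a function
without break points in `(-r, r)`, hence affine on `[-r, r]`; comparing its values at `-r`, `0`, `r`
gives the tropical Jensen formula `∑_{|b| < r} ω_g(b) (r - |b|) = g(r) + g(-r) - 2 g(0)`.
For `g = P ∘ f`, which has no poles, the left side is `2 N(r, 1₀ ⊘ (P ∘ f))`, and then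
`m_f(r, V_P) + N(r, 1₀ ⊘ (P ∘ f)) - d T_f(r)` is the constant `d ‖a‖ + d ‖f(0)‖ - (P ∘ f)(0)`.
-/

open Set Filter Topology

namespace TropNev

variable {f g : ℝ → ℝ}

theorem hasDerivAt_affine (c m x y : ℝ) : HasDerivAt (fun t => c + m * (t - x)) m y := by
  simpa using (((hasDerivAt_id y).sub_const x).const_mul m).const_add c

def HasAffineGermWithin (g : ℝ → ℝ) (m : ℝ) (s : Set ℝ) (x : ℝ) : Prop :=
  ∀ᶠ t in 𝓝[s] x, g t = g x + m * (t - x)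

theorem hasAffineGermWithin_affine (c m : ℝ) (s : Set ℝ) (x : ℝ) :
    HasAffineGermWithin (fun t => c + m * t) m s x :=
  Eventually.of_forall fun t => by ring

namespace HasAffineGermWithin

variable {a b : ℝ} {s : Set ℝ} {x : ℝ}

theorem mono {t : Set ℝ} (h : HasAffineGermWithin g a s x) (hts : t ⊆ s) :
    HasAffineGermWithin g a t x :=
  Eventually.filter_mono (nhdsWithin_mono x hts) h

theorem hasDerivWithinAt (h : HasAffineGermWithin g a s x) : HasDerivWithinAt g a s x :=
  (hasDerivAt_affine (g x) a x x).hasDerivWithinAt.congr_of_eventuallyEq h (by ring)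

theorem derivWithin_Ici (h : HasAffineGermWithin g a (Ici x) x) : derivWithin g (Ici x) x = a :=
  h.hasDerivWithinAt.derivWithin (uniqueDiffWithinAt_Ici x)

theorem derivWithin_Iic (h : HasAffineGermWithin g a (Iic x) x) : derivWithin g (Iic x) x = a :=
  h.hasDerivWithinAt.derivWithin (uniqueDiffWithinAt_Iic x)

theorem congr_of_eventuallyEq (h : HasAffineGermWithin g a s x) (hfg : f =ᶠ[𝓝 x] g) :
    HasAffineGermWithin f a s x := by
  filter_upwards [nhdsWithin_le_nhds hfg, h] with t hft hgt
  rw [hft, hgt, hfg.eq_of_nhds]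

theorem union {t : Set ℝ} (hs : HasAffineGermWithin g a s x) (ht : HasAffineGermWithin g a t x) :
    HasAffineGermWithin g a (s ∪ t) x := by
  rw [HasAffineGermWithin, nhdsWithin_union]
  exact eventually_sup.2 ⟨hs, ht⟩

theorem add (hf : HasAffineGermWithin f a s x) (hg : HasAffineGermWithin g b s x) :
    HasAffineGermWithin (fun t => f t + g t) (a + b) s x := by
  filter_upwards [hf, hg] with t hft hgt
  rw [hft, hgt]
  ring

theorem const_mul (c : ℝ) (hf : HasAffineGermWithin f a s x) :
    HasAffineGermWithin (fun t => c * f t) (c * a) s x := by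
  filter_upwards [hf] with t hft
  rw [hft]
  ring

theorem finset_sum {ι : Type*} {F : ι → ℝ → ℝ} {m : ι → ℝ} (u : Finset ι)
    (h : ∀ i ∈ u, HasAffineGermWithin (F i) (m i) s x) :
    HasAffineGermWithin (fun t => ∑ i ∈ u, F i t) (∑ i ∈ u, m i) s x := by
  filter_upwards [(eventually_all_finset u).2 h] with t ht
  rw [Finset.sum_congr rfl ht, Finset.sum_add_distrib, Finset.sum_mul]

theorem max_Ici (hf : HasAffineGermWithin f a (Ici x) x) (hg : HasAffineGermWithin g b (Ici x) x)
    (hfg : f x = g x) : HasAffineGermWithin (fun t => max (f t) (g t)) (max a b) (Ici x) x := by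
  filter_upwards [hf, hg, self_mem_nhdsWithin] with t hft hgt (ht : x ≤ t)
  rw [hft, hgt, hfg, max_add_add_left, ← max_mul_of_nonneg _ _ (sub_nonneg.2 ht), max_self]

theorem max_Iic (hf : HasAffineGermWithin f a (Iic x) x) (hg : HasAffineGermWithin g b (Iic x) x)
    (hfg : f x = g x) : HasAffineGermWithin (fun t => max (f t) (g t)) (min a b) (Iic x) x := by
  filter_upwards [hf, hg, self_mem_nhdsWithin] with t hft hgt (ht : t ≤ x)
  rw [hft, hgt, hfg, max_add_add_left]
  rcases le_total a b with hab | hab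
  · rw [min_eq_left hab, max_eq_left (mul_le_mul_of_nonpos_right hab (sub_nonpos.2 ht)), max_self]
  · rw [min_eq_right hab, max_eq_right (mul_le_mul_of_nonpos_right hab (sub_nonpos.2 ht)),
      max_self]

end HasAffineGermWithin

theorem omega_eq_of_hasAffineGermWithin {a b x : ℝ}
    (hr : HasAffineGermWithin g a (Ici x) x) (hl : HasAffineGermWithin g b (Iic x) x) :
    omega g x = a - b := by
  rw [omega, hr.derivWithin_Ici, hl.derivWithin_Iic]

theorem omega_eq_zero_of_differentiableAt {x : ℝ} (h : DifferentiableAt ℝ g x) :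
    omega g x = 0 := by
  rw [omega, h.derivWithin (uniqueDiffWithinAt_Ici x), h.derivWithin (uniqueDiffWithinAt_Iic x),
    sub_self]

theorem omega_eq_of_eventuallyEq {x : ℝ} (h : f =ᶠ[𝓝 x] g) :
    omega f x = omega g x := by
  rw [omega, omega, (h.filter_mono nhdsWithin_le_nhds).derivWithin_eq h.eq_of_nhds,
    (h.filter_mono nhdsWithin_le_nhds).derivWithin_eq h.eq_of_nhds]

theorem omega_neg (g : ℝ → ℝ) (x : ℝ) : omega (fun t => -g t) x = -omega g x := by
  rw [omega, omega, derivWithin.fun_neg, derivWithin.fun_neg]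
  ring

theorem exists_slope_of_hasAffineGermWithin {u v : ℝ} (hc : ContinuousOn g (Icc u v))
    (h : ∀ x ∈ Ioo u v, ∃ m, HasAffineGermWithin g m univ x) :
    ∃ m, ∀ x ∈ Icc u v, g x = g u + m * (x - u) := by
  have hderiv : ∀ x ∈ Ioo u v,
      HasDerivAt g (deriv g x) x ∧ deriv g =ᶠ[𝓝 x] fun _ => deriv g x := by
    intro x hx
    obtain ⟨m, hm⟩ := h x hx
    rw [HasAffineGermWithin, nhdsWithin_univ] at hm
    have hd : ∀ᶠ y in 𝓝 x, HasDerivAt g m y := hm.eventually_nhds.mono fun y hy =>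
      (hasDerivAt_affine _ _ _ y).congr_of_eventuallyEq hy
    rw [hd.self_of_nhds.deriv]
    exact ⟨hd.self_of_nhds, hd.mono fun y hy => hy.deriv⟩
  have hsecond : ∀ x ∈ Ioo u v, HasDerivAt (deriv g) 0 x := fun x hx =>
    (hasDerivAt_const x (deriv g x)).congr_of_eventuallyEq (hderiv x hx).2
  obtain ⟨m, hm⟩ := isOpen_Ioo.exists_is_const_of_deriv_eq_zero isPreconnected_Ioo
    (fun x hx => (hsecond x hx).differentiableAt.differentiableWithinAt)
    (fun x hx => (hsecond x hx).deriv)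
  refine ⟨m, fun x hx => ?_⟩
  rcases hx.1.eq_or_lt with rfl | hux
  · ring
  obtain ⟨c, hc', hslope⟩ := exists_hasDerivAt_eq_slope g (deriv g) hux
    (hc.mono (Icc_subset_Icc_right hx.2)) fun y hy => (hderiv y ⟨hy.1, hy.2.trans_le hx.2⟩).1
  rw [hm c ⟨hc'.1, hc'.2.trans_le hx.2⟩, eq_div_iff (sub_ne_zero.2 hux.ne')] at hslope
  linarith

theorem isTropMero_iff : IsTropMero g ↔ Continuous g ∧
    ∀ x, (∃ a, HasAffineGermWithin g a (Ici x) x) ∧ ∃ b, HasAffineGermWithin g b (Iic x) x := by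
  refine and_congr_right fun _ => forall_congr' fun x => ⟨?_, ?_⟩
  · rintro ⟨ε, hε, a, b, ha, hb⟩
    exact ⟨⟨a, mem_of_superset (Icc_mem_nhdsGE (by linarith)) ha⟩,
      ⟨b, mem_of_superset (Icc_mem_nhdsLE (by linarith)) hb⟩⟩
  · rintro ⟨⟨a, ha⟩, ⟨b, hb⟩⟩
    obtain ⟨u, hxu, hu⟩ := mem_nhdsGE_iff_exists_Icc_subset.1 ha
    obtain ⟨l, hlx, hl⟩ := mem_nhdsLE_iff_exists_Icc_subset.1 hb
    refine ⟨min (u - x) (x - l), lt_min (by linarith) (by linarith), a, b,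
      fun t ht => hu ⟨ht.1, ?_⟩, fun t ht => hl ⟨?_, ht.2⟩⟩
    · linarith [ht.2, min_le_left (u - x) (x - l)]
    · linarith [ht.1, min_le_right (u - x) (x - l)]

theorem max_eventuallyEq_right_of_lt {x : ℝ} (hf : ContinuousAt f x) (hg : ContinuousAt g x)
    (h : f x < g x) : (fun t => max (f t) (g t)) =ᶠ[𝓝 x] g :=
  (hf.eventually_lt hg h).mono fun _ ht => max_eq_right ht.le

theorem max_eventuallyEq_left_of_lt {x : ℝ} (hf : ContinuousAt f x) (hg : ContinuousAt g x)
    (h : g x < f x) : (fun t => max (f t) (g t)) =ᶠ[𝓝 x] f :=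
  (hg.eventually_lt hf h).mono fun _ ht => max_eq_left ht.le

namespace IsTropMero

theorem hasAffineGermWithin_Ici (hg : IsTropMero g) (x : ℝ) :
    HasAffineGermWithin g (derivWithin g (Ici x) x) (Ici x) x := by
  obtain ⟨a, ha⟩ := ((isTropMero_iff.1 hg).2 x).1
  rwa [ha.derivWithin_Ici]

theorem hasAffineGermWithin_Iic (hg : IsTropMero g) (x : ℝ) :
    HasAffineGermWithin g (derivWithin g (Iic x) x) (Iic x) x := by
  obtain ⟨b, hb⟩ := ((isTropMero_iff.1 hg).2 x).2
  rwa [hb.derivWithin_Iic]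

theorem add (hf : IsTropMero f) (hg : IsTropMero g) : IsTropMero (fun t => f t + g t) :=
  isTropMero_iff.2 ⟨hf.1.add hg.1, fun x =>
    ⟨⟨_, (hf.hasAffineGermWithin_Ici x).add (hg.hasAffineGermWithin_Ici x)⟩,
      ⟨_, (hf.hasAffineGermWithin_Iic x).add (hg.hasAffineGermWithin_Iic x)⟩⟩⟩

theorem const_mul (c : ℝ) (hg : IsTropMero g) : IsTropMero (fun t => c * g t) :=
  isTropMero_iff.2 ⟨continuous_const.mul hg.1, fun x =>
    ⟨⟨_, (hg.hasAffineGermWithin_Ici x).const_mul c⟩,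
      ⟨_, (hg.hasAffineGermWithin_Iic x).const_mul c⟩⟩⟩

theorem finset_sum {ι : Type*} {F : ι → ℝ → ℝ} (u : Finset ι) (h : ∀ i ∈ u, IsTropMero (F i)) :
    IsTropMero (fun t => ∑ i ∈ u, F i t) :=
  isTropMero_iff.2 ⟨continuous_finsetSum u fun i hi => (h i hi).1, fun x =>
    ⟨⟨_, .finset_sum u fun i hi => (h i hi).hasAffineGermWithin_Ici x⟩,
      ⟨_, .finset_sum u fun i hi => (h i hi).hasAffineGermWithin_Iic x⟩⟩⟩

theorem max (hf : IsTropMero f) (hg : IsTropMero g) : IsTropMero (fun t => max (f t) (g t)) := by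
  refine isTropMero_iff.2 ⟨hf.1.max hg.1, fun x => ?_⟩
  rcases lt_trichotomy (f x) (g x) with hlt | heq | hgt
  · have hmax := max_eventuallyEq_right_of_lt hf.1.continuousAt hg.1.continuousAt hlt
    exact ⟨⟨_, (hg.hasAffineGermWithin_Ici x).congr_of_eventuallyEq hmax⟩,
      ⟨_, (hg.hasAffineGermWithin_Iic x).congr_of_eventuallyEq hmax⟩⟩
  · exact ⟨⟨_, (hf.hasAffineGermWithin_Ici x).max_Ici (hg.hasAffineGermWithin_Ici x) heq⟩,
      ⟨_, (hf.hasAffineGermWithin_Iic x).max_Iic (hg.hasAffineGermWithin_Iic x) heq⟩⟩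
  · have hmax := max_eventuallyEq_left_of_lt hf.1.continuousAt hg.1.continuousAt hgt
    exact ⟨⟨_, (hf.hasAffineGermWithin_Ici x).congr_of_eventuallyEq hmax⟩,
      ⟨_, (hf.hasAffineGermWithin_Iic x).congr_of_eventuallyEq hmax⟩⟩

theorem omega_add (hf : IsTropMero f) (hg : IsTropMero g) (x : ℝ) :
    omega (fun t => f t + g t) x = omega f x + omega g x := by
  rw [omega_eq_of_hasAffineGermWithin
    ((hf.hasAffineGermWithin_Ici x).add (hg.hasAffineGermWithin_Ici x))
    ((hf.hasAffineGermWithin_Iic x).add (hg.hasAffineGermWithin_Iic x)), omega, omega]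
  ring

theorem omega_const_mul (c : ℝ) (hg : IsTropMero g) (x : ℝ) :
    omega (fun t => c * g t) x = c * omega g x := by
  rw [omega_eq_of_hasAffineGermWithin ((hg.hasAffineGermWithin_Ici x).const_mul c)
    ((hg.hasAffineGermWithin_Iic x).const_mul c), omega, mul_sub]

theorem omega_finset_sum {ι : Type*} {F : ι → ℝ → ℝ} (u : Finset ι)
    (h : ∀ i ∈ u, IsTropMero (F i)) (x : ℝ) :
    omega (fun t => ∑ i ∈ u, F i t) x = ∑ i ∈ u, omega (F i) x := by
  rw [omega_eq_of_hasAffineGermWithin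
    (.finset_sum u fun i hi => (h i hi).hasAffineGermWithin_Ici x)
    (.finset_sum u fun i hi => (h i hi).hasAffineGermWithin_Iic x), ← Finset.sum_sub_distrib]
  rfl

theorem eventually_omega_eq_zero (hg : IsTropMero g) (x : ℝ) : ∀ᶠ y in 𝓝[≠] x, omega g y = 0 := by
  rw [← nhdsLT_sup_nhdsGT, eventually_sup]
  constructor
  · have h := (hg.hasAffineGermWithin_Iic x).mono Iio_subset_Iic_self
    filter_upwards [eventually_eventually_nhdsWithin.2 h, self_mem_nhdsWithin] with y hy hyx
    rw [isOpen_Iio.nhdsWithin_eq hyx] at hy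
    exact omega_eq_zero_of_differentiableAt
      ((hasDerivAt_affine _ _ _ y).congr_of_eventuallyEq hy).differentiableAt
  · have h := (hg.hasAffineGermWithin_Ici x).mono Ioi_subset_Ici_self
    filter_upwards [eventually_eventually_nhdsWithin.2 h, self_mem_nhdsWithin] with y hy hyx
    rw [isOpen_Ioi.nhdsWithin_eq hyx] at hy
    exact omega_eq_zero_of_differentiableAt
      ((hasDerivAt_affine _ _ _ y).congr_of_eventuallyEq hy).differentiableAt

theorem finite_setOf_omega_ne_zero (hg : IsTropMero g) {K : Set ℝ} (hK : IsCompact K) :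
    {b ∈ K | omega g b ≠ 0}.Finite :=
  hK.finite_sdiff_of_mem_codiscreteWithin (mem_codiscreteWithin_iff_forall_mem_nhdsNE.2 fun x _ =>
    mem_of_superset (hg.eventually_omega_eq_zero x) subset_union_left)

theorem exists_slope_of_omega_eq_zero (hg : IsTropMero g) {u v : ℝ}
    (hω : ∀ x ∈ Ioo u v, omega g x = 0) : ∃ m, ∀ x ∈ Icc u v, g x = g u + m * (x - u) := by
  refine exists_slope_of_hasAffineGermWithin hg.1.continuousOn fun x hx =>
    ⟨derivWithin g (Ici x) x, ?_⟩
  have hslope : derivWithin g (Ici x) x = derivWithin g (Iic x) x := sub_eq_zero.1 (hω x hx)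
  rw [← Iic_union_Ici (a := x)]
  refine HasAffineGermWithin.union ?_ (hg.hasAffineGermWithin_Ici x)
  rw [hslope]
  exact hg.hasAffineGermWithin_Iic x

end IsTropMero

theorem isTropMero_affine (c m : ℝ) : IsTropMero (fun t => c + m * t) :=
  isTropMero_iff.2 ⟨by fun_prop, fun x =>
    ⟨⟨m, hasAffineGermWithin_affine c m _ x⟩, ⟨m, hasAffineGermWithin_affine c m _ x⟩⟩⟩

theorem isTropMero_abs_sub (b : ℝ) : IsTropMero (fun t => |t - b|) := by
  have h : (fun t => |t - b|) = fun t => max (-b + 1 * t) (b + -1 * t) := by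
    funext t
    rw [abs_eq_max_neg]
    congr 1 <;> ring
  rw [h]
  exact (isTropMero_affine _ _).max (isTropMero_affine _ _)

theorem omega_abs_sub (b x : ℝ) : omega (fun t => |t - b|) x = if x = b then 2 else 0 := by
  split_ifs with hxb
  · subst hxb
    have hr : HasAffineGermWithin (fun t => |t - x|) 1 (Ici x) x := by
      filter_upwards [self_mem_nhdsWithin] with t (ht : x ≤ t)
      rw [abs_of_nonneg (sub_nonneg.2 ht), sub_self, abs_zero]
      ring
    have hl : HasAffineGermWithin (fun t => |t - x|) (-1) (Iic x) x := by
      filter_upwards [self_mem_nhdsWithin] with t (ht : t ≤ x)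
      rw [abs_of_nonpos (sub_nonpos.2 ht), sub_self, abs_zero]
      ring
    rw [omega_eq_of_hasAffineGermWithin hr hl]
    norm_num
  · exact omega_eq_zero_of_differentiableAt
      ((hasDerivAt_abs (sub_ne_zero.2 hxb)).comp_sub_const x b).differentiableAt

theorem IsTropMero.sum_omega_mul_eq (hg : IsTropMero g) {r : ℝ} (hr : 0 ≤ r)
    {B : Finset ℝ} (hB : ∀ b ∈ B, |b| ≤ r) (hbreak : ∀ b, |b| < r → omega g b ≠ 0 → b ∈ B) :
    ∑ b ∈ B, omega g b * (r - |b|) = g r + g (-r) - 2 * g 0 := by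
  set c : ℝ → ℝ := fun b => -(omega g b / 2)
  have hbump : ∀ b ∈ B, IsTropMero fun t => c b * |t - b| := fun b _ =>
    (isTropMero_abs_sub b).const_mul (c b)
  set H : ℝ → ℝ := fun t => g t + ∑ b ∈ B, c b * |t - b|
  have hωH : ∀ x ∈ Ioo (-r) r, omega H x = 0 := by
    intro x hx
    rw [hg.omega_add (.finset_sum B hbump), IsTropMero.omega_finset_sum B hbump]
    simp only [(isTropMero_abs_sub _).omega_const_mul, omega_abs_sub, mul_ite, mul_zero,
      Finset.sum_ite_eq]
    split_ifs with hxB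
    · ring
    · by_contra h
      exact hxB (hbreak x (abs_lt.2 hx) (by simpa using h))
  obtain ⟨m, hm⟩ := (hg.add (.finset_sum B hbump)).exists_slope_of_omega_eq_zero hωH
  have hHr := hm r ⟨by linarith, le_rfl⟩
  have hH0 := hm 0 ⟨by linarith, hr⟩
  have hsum : ∑ b ∈ B, omega g b * (r - |b|) = -(∑ b ∈ B, c b * |r - b| +
      ∑ b ∈ B, c b * |-r - b| - 2 * ∑ b ∈ B, c b * |0 - b|) := by
    rw [Finset.mul_sum, ← Finset.sum_add_distrib, ← Finset.sum_sub_distrib,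
      ← Finset.sum_neg_distrib]
    refine Finset.sum_congr rfl fun b hb => ?_
    obtain ⟨h1, h2⟩ := abs_le.1 (hB b hb)
    rw [abs_of_nonneg (by linarith : 0 ≤ r - b), abs_of_nonpos (by linarith : -r - b ≤ 0),
      zero_sub, abs_neg]
    ring
  linarith

theorem isTropEntire_const (c : ℝ) : IsTropEntire (fun _ => c) :=
  ⟨by simpa using isTropMero_affine c 0,
    fun _ => (omega_eq_zero_of_differentiableAt (differentiableAt_const c)).ge⟩

namespace IsTropEntire

theorem add (hf : IsTropEntire f) (hg : IsTropEntire g) : IsTropEntire (fun t => f t + g t) :=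
  ⟨hf.1.add hg.1, fun x => by rw [hf.1.omega_add hg.1]; exact add_nonneg (hf.2 x) (hg.2 x)⟩

theorem max (hf : IsTropEntire f) (hg : IsTropEntire g) :
    IsTropEntire (fun t => max (f t) (g t)) := by
  refine ⟨hf.1.max hg.1, fun x => ?_⟩
  rcases lt_trichotomy (f x) (g x) with hlt | heq | hgt
  · rw [omega_eq_of_eventuallyEq
      (max_eventuallyEq_right_of_lt hf.1.1.continuousAt hg.1.1.continuousAt hlt)]
    exact hg.2 x
  · rw [omega_eq_of_hasAffineGermWithin
      ((hf.1.hasAffineGermWithin_Ici x).max_Ici (hg.1.hasAffineGermWithin_Ici x) heq)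
      ((hf.1.hasAffineGermWithin_Iic x).max_Iic (hg.1.hasAffineGermWithin_Iic x) heq), sub_nonneg]
    exact (min_le_left _ _).trans ((sub_nonneg.1 (hf.2 x)).trans (le_max_left _ _))
  · rw [omega_eq_of_eventuallyEq
      (max_eventuallyEq_left_of_lt hf.1.1.continuousAt hg.1.1.continuousAt hgt)]
    exact hf.2 x

theorem finset_sup' {ι : Type*} {F : ι → ℝ → ℝ} {u : Finset ι} (hu : u.Nonempty)
    (h : ∀ i ∈ u, IsTropEntire (F i)) : IsTropEntire (fun t => u.sup' hu fun i => F i t) := by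
  induction hu using Finset.Nonempty.cons_induction with
  | singleton i => simpa using h i (Finset.mem_singleton_self i)
  | cons i s _ hs ih =>
    simp only [Finset.sup'_cons hs]
    exact (h i (Finset.mem_cons_self i s)).max (ih fun j hj => h j (Finset.mem_cons_of_mem hj))

theorem multiset_sum {ι : Type*} {F : ι → ℝ → ℝ} (hF : ∀ i, IsTropEntire (F i))
    (s : Multiset ι) : IsTropEntire (fun t => (s.map fun i => F i t).sum) := by
  induction s using Multiset.induction_on with
  | empty => simpa using isTropEntire_const 0
  | cons i s ih =>
    simp only [Multiset.map_cons, Multiset.sum_cons]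
    exact (hF i).add ih

theorem countNroots_eq (hg : IsTropEntire g) {r : ℝ} (hr : 0 ≤ r) :
    countNroots g r = (g r + g (-r)) / 2 - g 0 := by
  have hfin := hg.1.finite_setOf_omega_ne_zero (isCompact_Icc (a := -r) (b := r))
  set B := hfin.toFinset
  have hB : ∀ b, b ∈ B ↔ |b| ≤ r ∧ omega g b ≠ 0 := by simp [B, abs_le]
  have hterm : ∀ b, (if |b| < r ∧ omega (fun x => -g x) b < 0 then
      -omega (fun x => -g x) b * (r - |b|) else 0) =
      if b ∈ B then omega g b * (r - |b|) else 0 := by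
    intro b
    simp only [omega_neg, neg_neg, neg_lt_zero, hB]
    rcases lt_or_ge |b| r with hbr | hbr
    · have hpos : 0 < omega g b ↔ omega g b ≠ 0 :=
        ⟨ne_of_gt, fun h => lt_of_le_of_ne (hg.2 b) (Ne.symm h)⟩
      simp only [hbr, hbr.le, true_and, hpos]
    · simp only [not_lt.2 hbr, false_and, if_false]
      split_ifs with h
      · rw [le_antisymm h.1 hbr, sub_self, mul_zero]
      · rfl
  have hsum := hg.1.sum_omega_mul_eq hr (B := B) (fun b hb => ((hB b).1 hb).1)
    fun b hb hω => (hB b).2 ⟨hb.le, hω⟩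
  rw [countNroots, countN, tsum_congr hterm, tsum_eq_sum (s := B) fun b hb => if_neg hb,
    Finset.sum_congr rfl fun b hb => if_pos hb, hsum]
  ring

end IsTropEntire

theorem isTropEntire_monos {n : ℕ} {f : Fin (n + 1) → ℝ → ℝ} (hf : ∀ k, IsTropEntire (f k))
    (d : ℕ) (s : Sym (Fin (n + 1)) d) : IsTropEntire (monos f d s) :=
  IsTropEntire.multiset_sum hf s

theorem finset_sup_add_coe_eq_coe_sup' {ι : Type*} [Fintype ι] (a : ι → EReal) (y : ι → ℝ)
    (htop : ∀ i, a i ≠ ⊤) {S : Finset ι} (hS : S.Nonempty) (hSa : ∀ i, i ∈ S ↔ a i ≠ ⊥) :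
    (Finset.univ.sup fun i => a i + (y i : EReal)) =
      ((S.sup' hS fun i => (a i).toReal + y i : ℝ) : EReal) := by
  apply le_antisymm
  · refine Finset.sup_le fun i _ => ?_
    by_cases hi : a i = ⊥
    · rw [hi, EReal.bot_add]
      exact bot_le
    · rw [← EReal.coe_toReal (htop i) hi, ← EReal.coe_add, EReal.coe_le_coe_iff]
      exact Finset.le_sup' (fun i => (a i).toReal + y i) ((hSa i).2 hi)
  · obtain ⟨i, hi, hmax⟩ := Finset.exists_mem_eq_sup' hS fun i => (a i).toReal + y i
    rw [hmax, EReal.coe_add, EReal.coe_toReal (htop i) ((hSa i).1 hi)]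
    exact Finset.le_sup (f := fun i => a i + (y i : EReal)) (Finset.mem_univ i)

theorem TropPoly.isTropEntire_compo {n d : ℕ} (P : TropPoly n d) {f : Fin (n + 1) → ℝ → ℝ}
    (hf : ∀ k, IsTropEntire (f k)) : IsTropEntire (P.compo f) := by
  -- a coefficient `⊤` makes `P ∘ f` identically `0`, since `EReal.toReal ⊤ = 0`
  by_cases htop : ∃ s, P.coeff s = ⊤
  · obtain ⟨s, hs⟩ := htop
    have hconst : P.compo f = fun _ => 0 := by
      funext t
      have heval : P.evalE (fun k => f k t) = ⊤ := top_le_iff.1 <|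
        (Finset.le_sup (f := fun s => P.term s _) (Finset.mem_univ s)).trans'
          (by rw [TropPoly.term, hs, EReal.top_add_coe])
      rw [TropPoly.compo, heval, EReal.toReal_top]
    rw [hconst]
    exact isTropEntire_const 0
  · simp only [not_exists] at htop
    set S := Finset.univ.filter fun s => P.coeff s ≠ ⊥
    obtain ⟨s₀, hs₀⟩ := P.nontriv
    have hS : S.Nonempty := ⟨s₀, by simp [S, hs₀]⟩
    have hsup : P.compo f = fun t => S.sup' hS fun s => (P.coeff s).toReal + monos f d s t := by
      funext t
      exact (congrArg EReal.toReal (finset_sup_add_coe_eq_coe_sup' P.coeff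
        (fun s => monos f d s t) htop hS (by simp [S]))).trans (EReal.toReal_coe _)
    rw [hsup]
    exact IsTropEntire.finset_sup' hS fun s _ =>
      (isTropEntire_const _).add (isTropEntire_monos hf d s)

theorem proxCurve_add_countNroots_compo {n d : ℕ} {f : Fin (n + 1) → ℝ → ℝ}
    (hf : ∀ k, IsTropEntire (f k)) (P : TropPoly n d) {r : ℝ} (hr : 0 ≤ r) :
    proxCurve f P r + countNroots (P.compo f) r =
      d * curveT f r + (d * P.coeffNorm + d * tmax (fun k => f k 0) - P.compo f 0) := by
  rw [(P.isTropEntire_compo hf).countNroots_eq hr, proxCurve, weil, weil, curveT]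
  ring

end TropNev

open TropNev Filter MeasureTheory Topology

theorem stmt6_general {n d : ℕ} (f : Fin (n + 1) → ℝ → ℝ) (hf : IsTropCurve f)
    (P : TropPoly n d) :
    ∃ C : ℝ, ∀ᶠ r : ℝ in Filter.atTop,
      |proxCurve f P r + countNroots (P.compo f) r - (d : ℝ) * curveT f r| ≤ C := by
  refine ⟨|d * P.coeffNorm + d * tmax (fun k => f k 0) - P.compo f 0|, ?_⟩
  filter_upwards [eventually_ge_atTop 0] with r hr
  rw [proxCurve_add_countNroots_compo hf.1 P hr, add_sub_cancel_left]

/-- tropical first main theorem for hypersurfaces. -/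
theorem stmt6 {n d : ℕ} (hd : 1 ≤ d) (f : Fin (n + 1) → ℝ → ℝ) (hf : IsTropCurve f)
    (P : TropPoly n d) (hP : ∃ t : ℝ, (fun k => f k t) ∉ P.hyp) :
    ∃ C : ℝ, ∀ᶠ r : ℝ in Filter.atTop,
      |proxCurve f P r + countNroots (P.compo f) r - (d : ℝ) * curveT f r| ≤ C :=
  stmt6_general f hf P
end
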